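/- arXiv:2503.14707 — 11 statements merged into one kernel-verified Lean document; each statement's English description precedes it below -/
import Mathlib

section
/- Let Z = {z_1,…,z_n} with n ≥ 4 and let D = {D_1,…,D_m} be a family of 4-element subsets of Z in which every element of Z belongs to exactly 3 members. Define a set of parties C = A ∪ E with A = {c_1,…,c_m} (party c_j corresponding to subset D_j) and E = {e_1,…,e_{3n+1}}, and 2n voters with linear orders: for 1 ≤ i ≤ n, order O_i ranks e_1 first, then in positions 2–4 the three parties c_j with z_i ∈ D_j (in some fixed order), then e_2,…,e_{3n+1}, then the remaining parties of A in some fixed order; for n+1 ≤ i ≤ 2n, order O_i ranks e_1 first, then e_2,…,e_{3n+1}, then all parties of A in some fixed order. Call a tuple Ô = (Ô_1,…,Ô_{2n}) of linear orders a legal coalition-shift bribe if, for each voter i, every pair of parties whose relative order differs between O_i and Ô_i consists of a party of A that is below the other party in O_i and above it in Ô_i; the cost of Ô is the total number, over all voters, of such changed pairs. Given Ô, say a party c is active if at least 4 voters rank c first in Ô, and let av(c) be the number of voters ranking c first if c is active and 0 otherwise. Then there exists a legal coalition-shift bribe Ô of cost at most 3n with Σ_{c∈A} av(c) ≥ Σ_{c∈E}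 av(c) if and only if D contains an exact cover of Z. -/
/-!
Legality forces every voter's new top party to be `e_1` or a party of `A`, and lifting a party
to the top costs at least its old position. With budget `3n` the `n` second-half voters therefore
keep voting for `e_1` (all of `A` sits below position `3n + 1` there), and a first-half voter `i`
can only switch to one of the three `c_j` with `z_i ∈ D_j`. Since `e_1` is active with at least
`n` of the `2n` votes, `A` can match `E` only if all first-half voters switch and every party of
`A` ends with `0` or at least `4` votes. As `c_j` can only win the `4` voters of `D_j`, the parties
that win votes win all of their set, and these sets form an exact cover. Conversely, given an exact
cover, each first-half voter `i` lifts the cover set containing `z_i` from position at most `4`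
to the top.
-/

open Finset

namespace Stmt2

/-- The parties: `Sum.inl j` is the coalition party `c_{j+1}` (corresponding to the
subset `D_{j+1}`), and `Sum.inr k` is the party `e_{k+1}`. -/
abbrev Party (m n : ℕ) := Fin m ⊕ Fin (3 * n + 1)

/-- A linear order on the `m + (3n+1)` parties; `(O c).val + 1` is the position of `c`,
position 1 (i.e. value `0`) being the top. -/
abbrev Ord (m n : ℕ) := Party m n ≃ Fin (m + (3 * n + 1))

/-- Number of pairs whose relative order differs between `O` and `Ob`, oriented so that
in each pair `(x, y)` the party `y` is below `x` in `O` and above `x` in `Ob`. -/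
def invCount {m n : ℕ} (O Ob : Ord m n) : ℕ :=
  ((Finset.univ : Finset (Party m n × Party m n)).filter
    fun q => O q.1 < O q.2 ∧ Ob q.2 < Ob q.1).card

/-- Number of voters ranking party `c` first under the profile `Ob`. -/
def votes {m n : ℕ} (Ob : Fin (2 * n) → Ord m n) (c : Party m n) : ℕ :=
  (Finset.univ.filter fun i : Fin (2 * n) => ((Ob i) c).val = 0).card

/-- Active vote count: the number of voters ranking `c` first if it is at least 4
(i.e. `c` is active), and `0` otherwise. -/
def av {m n : ℕ} (Ob : Fin (2 * n) → Ord m n) (c : Party m n) : ℕ :=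
  if 4 ≤ votes Ob c then votes Ob c else 0

lemma card_filter_lt_apply {α : Type*} [Fintype α] {N : ℕ} (e : α ≃ Fin N) (t : Fin N) :
    #{x | e x < t} = t.val := by
  rw [← Fin.card_Iio t]
  exact card_equiv e (by simp)

lemma card_le_val_of_notMem {α : Type*} [DecidableEq α] {N : ℕ} (e : α ≃ Fin N) {S : Finset α}
    (hS : ∀ p ∈ S, (e p).val < #S) {c : α} (hc : c ∉ S) : #S ≤ (e c).val := by
  by_contra! h
  have := card_le_card_of_injOn (fun p => (e p).val) (t := range #S) (s := insert c S)
    (by simpa [Set.MapsTo] using ⟨h, hS⟩) (fun p _ q _ hpq => e.injective (Fin.ext hpq))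
  simp [card_insert_of_notMem hc] at this

lemma val_cycleRange {N : ℕ} [NeZero N] (v a : Fin N) :
    (Fin.cycleRange v a).val = if a < v then a.val + 1 else if a = v then 0 else a.val := by
  rcases lt_trichotomy a v with h | rfl | h
  · rw [if_pos h, Fin.coe_cycleRange_of_lt h]
  · simp
  · rw [if_neg h.not_gt, if_neg h.ne', Fin.cycleRange_of_gt h]

lemma lt_and_cycleRange_lt_iff {N : ℕ} [NeZero N] {v a b : Fin N} :
    a < b ∧ Fin.cycleRange v b < Fin.cycleRange v a ↔ b = v ∧ a < v := by
  simp only [Fin.lt_def, Fin.ext_iff, val_cycleRange]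
  split_ifs <;> omega

lemma card_filter_eq_card_filter_castLE {n N : ℕ} (h : n ≤ N) (P : Fin N → Prop)
    [DecidablePred P] (hP : ∀ i, P i → i.val < n) :
    #{i | P i} = #{z : Fin n | P (Fin.castLE h z)} := by
  symm
  refine card_bij (fun z _ => Fin.castLE h z) (by simp)
    (fun _ _ _ _ h' => Fin.castLE_injective h h') ?_
  intro i hi
  exact ⟨⟨i, hP i (mem_filter.mp hi).2⟩, by simpa using hi, rfl⟩

/-- An exact cover, encoded by the map sending each element to the cover set containing it. -/
def IsExactCoverChoice {ι Z : Type*} [Fintype Z] [DecidableEq ι] (D : ι → Finset Z)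
    (g : Z → ι) : Prop :=
  ∀ z, D (g z) = univ.filter fun z' => g z' = g z

lemma exists_exactCover_iff_exists_isExactCoverChoice {ι Z : Type*} [Fintype Z] [DecidableEq Z]
    [DecidableEq ι] (D : ι → Finset Z) :
    (∃ J : Finset ι, (∀ j ∈ J, ∀ j' ∈ J, j ≠ j' → Disjoint (D j) (D j')) ∧
      J.biUnion D = univ) ↔ ∃ g, IsExactCoverChoice D g := by
  constructor
  · rintro ⟨J, hdisj, hcover⟩
    have hmem : ∀ z, ∃ j ∈ J, z ∈ D j := fun z => mem_biUnion.mp (hcover ▸ mem_univ z)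
    choose g hgJ hg using hmem
    refine ⟨g, fun z => ext fun z' => ?_⟩
    simp only [mem_filter, mem_univ, true_and]
    refine ⟨fun h => ?_, fun h => h ▸ hg z'⟩
    by_contra hne
    exact disjoint_left.mp (hdisj _ (hgJ z') _ (hgJ z) hne) (hg z') h
  · rintro ⟨g, hg⟩
    refine ⟨univ.image g, ?_, eq_univ_of_forall fun z => mem_biUnion.mpr
      ⟨g z, mem_image_of_mem g (mem_univ z), by simp [hg z]⟩⟩
    simp only [mem_image, mem_univ, true_and]
    rintro _ ⟨z, rfl⟩ _ ⟨z', rfl⟩ hne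
    rw [hg, hg, disjoint_filter]
    exact fun _ _ h h' => hne (h.symm.trans h')

section Rankings

variable {m n : ℕ}

def topParty (O : Ord m n) : Party m n := O.symm ⟨0, by omega⟩

lemma val_eq_zero_iff {O : Ord m n} {c : Party m n} : (O c).val = 0 ↔ topParty O = c := by
  rw [topParty, Equiv.symm_apply_eq, Fin.ext_iff, eq_comm]

lemma le_invCount_of_topParty_eq (O Ob : Ord m n) {c : Party m n} (hc : topParty Ob = c) :
    (O c).val ≤ invCount O Ob := by
  rw [← card_filter_lt_apply O (O c), invCount]
  refine card_le_card_of_injOn (fun x => (x, c)) (fun x hx => ?_)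
    (fun x _ y _ h => congrArg Prod.fst h)
  simp only [coe_filter, mem_univ, true_and, Set.mem_ofPred_eq] at hx ⊢
  refine ⟨hx, ?_⟩
  rw [Fin.lt_def, val_eq_zero_iff.mpr hc, Nat.pos_iff_ne_zero, Ne, val_eq_zero_iff, hc]
  exact (ne_of_apply_ne O hx.ne).symm

lemma topParty_eq_or_of_legal {O Ob : Ord m n}
    (hleg : ∀ x y, O x < O y → Ob y < Ob x → ∃ j, y = .inl j) :
    topParty Ob = topParty O ∨ ∃ j, topParty Ob = .inl j := by
  by_cases h : topParty Ob = topParty O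
  · exact .inl h
  have hpos : ∀ {O' : Ord m n} {x}, topParty O' ≠ x → O' (topParty O') < O' x := fun hx => by
    rw [Fin.lt_def, val_eq_zero_iff.mpr rfl, Nat.pos_iff_ne_zero, Ne, val_eq_zero_iff]
    exact hx
  exact .inr (hleg _ _ (hpos (Ne.symm h)) (hpos h))

def moveToTop (O : Ord m n) (c : Party m n) : Ord m n := O.trans (Fin.cycleRange (O c))

lemma topParty_moveToTop (O : Ord m n) (c : Party m n) : topParty (moveToTop O c) = c := by
  rw [← val_eq_zero_iff]
  simp [moveToTop]

lemma invCount_moveToTop (O : Ord m n) (c : Party m n) :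
    invCount O (moveToTop O c) = (O c).val := by
  have : univ.filter (fun q : Party m n × Party m n =>
        O q.1 < O q.2 ∧ moveToTop O c q.2 < moveToTop O c q.1)
      = (univ.filter fun x => O x < O c).image (fun x => (x, c)) := by
    ext ⟨x, y⟩
    simp only [mem_filter, mem_univ, true_and, mem_image, Prod.mk.injEq, moveToTop,
      Equiv.trans_apply, lt_and_cycleRange_lt_iff, EmbeddingLike.apply_eq_iff_eq]
    constructor
    · rintro ⟨rfl, h⟩
      exact ⟨x, h, rfl, rfl⟩
    · rintro ⟨x, h, rfl, rfl⟩
      exact ⟨rfl, h⟩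
  rw [invCount, this, card_image_of_injective _ (fun x y h => congrArg Prod.fst h),
    card_filter_lt_apply]

lemma eq_of_lt_of_moveToTop_lt {O : Ord m n} {c x y : Party m n} (hxy : O x < O y)
    (h : moveToTop O c y < moveToTop O c x) : y = c :=
  O.injective (lt_and_cycleRange_lt_iff.mp ⟨hxy, h⟩).1

lemma card_le_val_inl_of_notMem {O : Ord m n} {s : Finset (Fin m)}
    (hA : ∀ j ∈ s, (O (.inl j)).val < #s + (3 * n + 1))
    (hE : ∀ k, (O (.inr k)).val < #s + (3 * n + 1)) {j : Fin m} (hj : j ∉ s) :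
    #s + (3 * n + 1) ≤ (O (.inl j)).val := by
  simpa using card_le_val_of_notMem O (S := s.disjSum univ) (by simpa using ⟨hA, hE⟩)
    (by simpa using hj)

lemma topParty_eq_inr_zero_of_forall_inr_le {O Ob : Ord m n} (htop : (O (.inr 0)).val = 0)
    (hE : ∀ k, (O (.inr k)).val ≤ 3 * n)
    (hleg : ∀ x y, O x < O y → Ob y < Ob x → ∃ j, y = .inl j)
    (hcost : invCount O Ob ≤ 3 * n) : topParty Ob = .inr 0 := by
  rcases topParty_eq_or_of_legal hleg with h | ⟨j, hj⟩
  · rwa [val_eq_zero_iff.mp htop] at h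
  · have hpos := card_le_val_inl_of_notMem (O := O) (s := ∅) (by simp)
      (fun k => by simpa using Nat.lt_succ_of_le (hE k)) (notMem_empty j)
    have := le_invCount_of_topParty_eq O Ob hj
    simp only [card_empty] at hpos
    omega

lemma mem_of_topParty_eq_inl {O Ob : Ord m n} {D : Fin m → Finset (Fin n)} {z : Fin n}
    (hD3 : #{j | z ∈ D j} = 3) (hA : ∀ j, z ∈ D j → (O (.inl j)).val ≤ 3)
    (hE : ∀ k, (O (.inr k)).val ≤ 3 * n + 3) (hcost : invCount O Ob ≤ 3 * n) {j : Fin m}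
    (hj : topParty Ob = .inl j) : z ∈ D j := by
  by_contra hz
  have hpos := card_le_val_inl_of_notMem (s := {j | z ∈ D j}) (O := O)
    (fun j hj => by have := hA j (mem_filter.mp hj).2; omega) (fun k => by have := hE k; omega)
    (by simpa using hz)
  have := le_invCount_of_topParty_eq O Ob hj
  omega

end Rankings

section Votes

variable {m n : ℕ}

lemma votes_eq_card (Ob : Fin (2 * n) → Ord m n) (c : Party m n) :
    votes Ob c = #{i | topParty (Ob i) = c} := by
  simp only [votes, val_eq_zero_iff]

lemma sum_votes_inl_add_sum_votes_inr (Ob : Fin (2 * n) → Ord m n) :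
    ∑ j, votes Ob (.inl j) + ∑ k, votes Ob (.inr k) = 2 * n := by
  rw [← Fintype.sum_sum_type]
  simp_rw [votes_eq_card]
  rw [← card_eq_sum_card_fiberwise (fun _ _ => mem_univ _), card_univ, Fintype.card_fin]

lemma av_le_votes (Ob : Fin (2 * n) → Ord m n) (c : Party m n) : av Ob c ≤ votes Ob c := by
  unfold av
  split <;> omega

lemma av_eq_votes_iff {Ob : Fin (2 * n) → Ord m n} {c : Party m n} :
    av Ob c = votes Ob c ↔ votes Ob c = 0 ∨ 4 ≤ votes Ob c := by
  unfold av
  split <;> omega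

lemma card_filter_val_lt_two_mul : #{i : Fin (2 * n) | i.val < n} = n := by
  rw [Fin.card_filter_val_lt]
  omega

lemma card_filter_le_val_two_mul : #{i : Fin (2 * n) | n ≤ i.val} = n := by
  have := card_filter_add_card_filter_not (s := univ) fun i : Fin (2 * n) => i.val < n
  simp only [not_lt, card_univ, Fintype.card_fin, card_filter_val_lt_two_mul] at this
  omega

lemma votes_inl_eq_card (Ob : Fin (2 * n) → Ord m n) (g : Fin n → Fin m)
    (hg : ∀ z, topParty (Ob (Fin.castLE (by omega) z)) = .inl (g z))
    (hlt : ∀ i j, topParty (Ob i) = .inl j → i.val < n) (j : Fin m) :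
    votes Ob (.inl j) = #{z | g z = j} := by
  rw [votes_eq_card, card_filter_eq_card_filter_castLE (by omega) _ fun i => hlt i j]
  simp [hg]

lemma votes_inr_zero_eq_and_av_inl_eq (hn : 4 ≤ n) (Ob : Fin (2 * n) → Ord m n)
    (h0 : n ≤ votes Ob (.inr 0))
    (hav : ∑ k, av Ob (.inr k) ≤ ∑ j, av Ob (.inl j)) :
    votes Ob (.inr 0) = n ∧ ∀ j, av Ob (.inl j) = votes Ob (.inl j) := by
  have htotal := sum_votes_inl_add_sum_votes_inr Ob
  have hE : votes Ob (.inr 0) ≤ ∑ k, av Ob (.inr k) := by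
    rw [← av_eq_votes_iff.mpr (.inr (by omega))]
    exact single_le_sum (f := fun k => av Ob (.inr k)) (fun _ _ => Nat.zero_le _) (mem_univ 0)
  have hE' : votes Ob (.inr 0) ≤ ∑ k, votes Ob (.inr k) :=
    single_le_sum (f := fun k => votes Ob (.inr k)) (fun _ _ => Nat.zero_le _) (mem_univ 0)
  have hA : ∑ j, av Ob (.inl j) ≤ ∑ j, votes Ob (.inl j) := sum_le_sum fun j _ => av_le_votes _ _
  refine ⟨by omega, fun j => ?_⟩
  exact (sum_eq_sum_iff_of_le fun j _ => av_le_votes Ob (.inl j)).mp (by omega) j (mem_univ j)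

end Votes

section Reduction

variable {m n : ℕ} {D : Fin m → Finset (Fin n)} {O Ob : Fin (2 * n) → Ord m n}

lemma topParty_of_cheap_legal_bribe (hD3 : ∀ z : Fin n, #{j | z ∈ D j} = 3)
    (htop : ∀ i, ((O i) (.inr 0)).val = 0)
    (hfc : ∀ (i : Fin (2 * n)) (h : i.val < n), ∀ j : Fin m,
      ((⟨i.val, h⟩ : Fin n) ∈ D j ↔ 1 ≤ ((O i) (.inl j)).val ∧ ((O i) (.inl j)).val ≤ 3))
    (hfe : ∀ (i : Fin (2 * n)), i.val < n → ∀ k : Fin (3 * n + 1), k ≠ 0 →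
      4 ≤ ((O i) (.inr k)).val ∧ ((O i) (.inr k)).val ≤ 3 * n + 3)
    (hse : ∀ (i : Fin (2 * n)), n ≤ i.val → ∀ k : Fin (3 * n + 1), k ≠ 0 →
      1 ≤ ((O i) (.inr k)).val ∧ ((O i) (.inr k)).val ≤ 3 * n)
    (hleg : ∀ i, ∀ x y : Party m n, (O i) x < (O i) y → (Ob i) y < (Ob i) x →
      ∃ j : Fin m, y = .inl j)
    (hcost : ∀ i, invCount (O i) (Ob i) ≤ 3 * n) :
    (∀ i : Fin (2 * n), n ≤ i.val → topParty (Ob i) = .inr 0) ∧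
      ∀ (z : Fin n) j, topParty (Ob (Fin.castLE (by omega) z)) = .inl j → z ∈ D j := by
  have hE : ∀ i k, (n ≤ i.val → ((O i) (.inr k)).val ≤ 3 * n) ∧
      (i.val < n → ((O i) (.inr k)).val ≤ 3 * n + 3) := by
    intro i k
    rcases eq_or_ne k 0 with rfl | hk
    · simp only [htop]
      omega
    · exact ⟨fun hi => (hse i hi k hk).2, fun hi => (hfe i hi k hk).2⟩
  refine ⟨fun i hi => topParty_eq_inr_zero_of_forall_inr_le (htop i) (fun k => (hE i k).1 hi)
    (hleg i) (hcost i), fun z j => ?_⟩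
  exact mem_of_topParty_eq_inl (hD3 z) (fun j hj => ((hfc _ z.isLt j).mp hj).2)
    (fun k => (hE _ k).2 z.isLt) (hcost _)

lemma exists_isExactCoverChoice_of_bribe (hn : 4 ≤ n) (hD4 : ∀ j, #(D j) = 4)
    (htop : ∀ i, ((O i) (.inr 0)).val = 0)
    (hsecond : ∀ i : Fin (2 * n), n ≤ i.val → topParty (Ob i) = .inr 0)
    (hfirst : ∀ (z : Fin n) j, topParty (Ob (Fin.castLE (by omega) z)) = .inl j → z ∈ D j)
    (hleg : ∀ i, ∀ x y : Party m n, (O i) x < (O i) y → (Ob i) y < (Ob i) x →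
      ∃ j : Fin m, y = .inl j)
    (hav : ∑ k, av Ob (.inr k) ≤ ∑ j, av Ob (.inl j)) :
    ∃ g, IsExactCoverChoice D g := by
  have hsub : univ.filter (fun i : Fin (2 * n) => n ≤ i.val) ⊆
      univ.filter fun i => topParty (Ob i) = .inr 0 :=
    fun i hi => by simpa using hsecond i (by simpa using hi)
  have hv := card_le_card hsub
  rw [card_filter_le_val_two_mul, ← votes_eq_card] at hv
  obtain ⟨hv0, hav_eq⟩ := votes_inr_zero_eq_and_av_inl_eq hn Ob hv hav
  -- `e_1` wins exactly the second half, so every first-half voter now votes in `A`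
  have hA : ∀ z : Fin n, ∃ j, topParty (Ob (Fin.castLE (by omega) z)) = .inl j := by
    intro z
    refine (topParty_eq_or_of_legal (hleg _)).resolve_left fun h => ?_
    rw [val_eq_zero_iff.mp (htop _)] at h
    have hcard := card_le_card (insert_subset (by simpa using h) hsub)
    rw [card_insert_of_notMem (by simp), card_filter_le_val_two_mul, ← votes_eq_card, hv0] at hcard
    omega
  choose g hg using hA
  have hvotes := votes_inl_eq_card Ob g hg fun i j h => by
    by_contra! hi
    exact Sum.inr_ne_inl ((hsecond i hi).symm.trans h)
  refine ⟨g, fun z => (eq_of_subset_of_card_le (fun z' hz' => ?_) ?_).symm⟩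
  · rw [mem_filter] at hz'
    exact hfirst z' _ (hz'.2 ▸ hg z')
  · have hpos : 0 < votes Ob (.inl (g z)) := by
      rw [hvotes]
      exact card_pos.mpr ⟨z, by simp⟩
    rw [hD4, ← hvotes]
    have := av_eq_votes_iff.mp (hav_eq (g z))
    omega

lemma sum_av_inr_le_sum_av_inl_of_isExactCoverChoice (hD4 : ∀ j, #(D j) = 4) {g : Fin n → Fin m}
    (hg : IsExactCoverChoice D g) (hvotes : ∀ j, votes Ob (.inl j) = #{z | g z = j}) :
    ∑ k, av Ob (.inr k) ≤ ∑ j, av Ob (.inl j) := by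
  have hav : ∀ j, av Ob (.inl j) = votes Ob (.inl j) := fun j => by
    rw [av_eq_votes_iff, hvotes, card_eq_zero, filter_eq_empty_iff]
    by_cases h : ∃ z, g z = j
    · obtain ⟨z, rfl⟩ := h
      simp [← hg z, hD4]
    · push Not at h
      exact .inl fun z _ => h z
  have hA : ∑ j, votes Ob (.inl j) = n := by
    simp only [hvotes]
    rw [← card_eq_sum_card_fiberwise (fun _ _ => mem_univ _), card_univ, Fintype.card_fin]
  have htotal := sum_votes_inl_add_sum_votes_inr Ob
  have hE : ∑ k, av Ob (.inr k) ≤ ∑ k, votes Ob (.inr k) := sum_le_sum fun k _ => av_le_votes _ _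
  simp only [hav]
  omega

lemma exists_bribe_of_isExactCoverChoice (hD4 : ∀ j, #(D j) = 4)
    (htop : ∀ i, ((O i) (.inr 0)).val = 0)
    (hfc : ∀ (i : Fin (2 * n)) (h : i.val < n), ∀ j : Fin m,
      ((⟨i.val, h⟩ : Fin n) ∈ D j ↔ 1 ≤ ((O i) (.inl j)).val ∧ ((O i) (.inl j)).val ≤ 3))
    {g : Fin n → Fin m} (hg : IsExactCoverChoice D g) :
    ∃ Ob : Fin (2 * n) → Ord m n,
      (∀ i, ∀ x y : Party m n, (O i) x < (O i) y → (Ob i) y < (Ob i) x →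
        ∃ j : Fin m, y = .inl j) ∧
      ∑ i, invCount (O i) (Ob i) ≤ 3 * n ∧
      ∑ k, av Ob (.inr k) ≤ ∑ j, av Ob (.inl j) := by
  -- second-half voters "lift" `e_1`, which is already on top, i.e. they are left unchanged
  let T : Fin (2 * n) → Party m n := fun i => if h : i.val < n then .inl (g ⟨i, h⟩) else .inr 0
  have hpos : ∀ i, ((O i) (T i)).val ≤ if i.val < n then 3 else 0 := by
    intro i
    by_cases h : i.val < n
    · simp only [T, dif_pos h, if_pos h]
      exact ((hfc i h _).mp (by rw [hg]; simp)).2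
    · simp only [T, dif_neg h, if_neg h, htop, le_refl]
  refine ⟨fun i => moveToTop (O i) (T i), fun i x y hxy hyx => ?_, ?_,
    sum_av_inr_le_sum_av_inl_of_isExactCoverChoice hD4 hg
      (votes_inl_eq_card _ g (fun z => by simp [topParty_moveToTop, T])
        fun i j h => by by_contra hi; simp [topParty_moveToTop, T, hi] at h)⟩
  · have hy := eq_of_lt_of_moveToTop_lt hxy hyx
    by_cases h : i.val < n
    · exact ⟨g ⟨i, h⟩, by simp [hy, T, h]⟩
    · simp only [T, dif_neg h] at hy
      subst hy
      simp [Fin.lt_def, htop] at hxy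
  · calc ∑ i, invCount (O i) (moveToTop (O i) (T i)) = ∑ i, ((O i) (T i)).val := by
          simp only [invCount_moveToTop]
      _ ≤ ∑ i : Fin (2 * n), if i.val < n then 3 else 0 := sum_le_sum fun i _ => hpos i
      _ = 3 * n := by rw [sum_ite, sum_const, card_filter_val_lt_two_mul]; simp [mul_comm]

end Reduction

/-- the reduction from 3-4-Exact-Cover to Plurality with threshold
under coalition-shift-bribery: a legal coalition-shift bribe of cost at most `3n`
giving the coalition `A` at least as many active votes as `E` exists iff
`D` contains an exact cover of `Z`. -/
theorem stmt_2 (n m : ℕ) (hn : 4 ≤ n)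
    (D : Fin m → Finset (Fin n))
    (hD4 : ∀ j, (D j).card = 4)
    (hD3 : ∀ z : Fin n, (Finset.univ.filter fun j => z ∈ D j).card = 3)
    (O : Fin (2 * n) → Ord m n)
    -- every voter ranks `e_1` first
    (htop : ∀ i, ((O i) (Sum.inr 0)).val = 0)
    -- for voters `i` with `i.val < n`: positions 2–4 (values 1–3) hold exactly the
    -- three coalition parties `c_j` with `z_i ∈ D_j`
    (hfc : ∀ (i : Fin (2 * n)) (h : i.val < n), ∀ j : Fin m,
      ((⟨i.val, h⟩ : Fin n) ∈ D j ↔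
        1 ≤ ((O i) (Sum.inl j)).val ∧ ((O i) (Sum.inl j)).val ≤ 3))
    -- for voters `i` with `i.val < n`: `e_2, …, e_{3n+1}` occupy positions 5–(3n+4)
    -- (values 4–(3n+3)); the remaining coalition parties follow
    (hfe : ∀ (i : Fin (2 * n)), i.val < n → ∀ k : Fin (3 * n + 1), k ≠ 0 →
      4 ≤ ((O i) (Sum.inr k)).val ∧ ((O i) (Sum.inr k)).val ≤ 3 * n + 3)
    -- for voters `i` with `n ≤ i.val`: `e_2, …, e_{3n+1}` occupy positions 2–(3n+1)
    -- (values 1–3n); all coalition parties follow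
    (hse : ∀ (i : Fin (2 * n)), n ≤ i.val → ∀ k : Fin (3 * n + 1), k ≠ 0 →
      1 ≤ ((O i) (Sum.inr k)).val ∧ ((O i) (Sum.inr k)).val ≤ 3 * n) :
    (∃ Ob : Fin (2 * n) → Ord m n,
      -- legal coalition-shift bribe: in every changed pair, the party moving up is in `A`
      (∀ i, ∀ x y : Party m n, (O i) x < (O i) y → (Ob i) y < (Ob i) x →
        ∃ j : Fin m, y = Sum.inl j) ∧
      -- cost at most 3n
      (∑ i, invCount (O i) (Ob i)) ≤ 3 * n ∧
      -- the coalition's active votes are at least those of `E`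
      (∑ k : Fin (3 * n + 1), av Ob (Sum.inr k)) ≤ ∑ j : Fin m, av Ob (Sum.inl j)) ↔
    (∃ J : Finset (Fin m),
      (∀ j ∈ J, ∀ j' ∈ J, j ≠ j' → Disjoint (D j) (D j')) ∧
      J.biUnion D = Finset.univ) := by
  rw [exists_exactCover_iff_exists_isExactCoverChoice]
  constructor
  · rintro ⟨Ob, hleg, hcost, hav⟩
    have hcost_i : ∀ i, invCount (O i) (Ob i) ≤ 3 * n := fun i =>
      (single_le_sum (f := fun i => invCount (O i) (Ob i)) (fun _ _ => Nat.zero_le _)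
        (mem_univ i)).trans hcost
    obtain ⟨hsecond, hfirst⟩ := topParty_of_cheap_legal_bribe hD3 htop hfc hfe hse hleg hcost_i
    exact exists_isExactCoverChoice_of_bribe hn hD4 htop hsecond hfirst hleg hav
  · rintro ⟨g, hg⟩
    exact exists_bribe_of_isExactCoverChoice hD4 htop hfc hg

end Stmt2
end

section
/- Let G be a simple graph on vertex set U = {1,…,2n}, and let P, Q, M be nonnegative reals. Consider the set of parties C = {x} ∪ {c_{1,i} : i ∈ U} ∪ {c_{2,i} : i ∈ U} and the linear order O ranking x first, then c_{1,1},…,c_{1,2n}, then c_{2,1},…,c_{2,2n}. Assign to each unordered pair of parties a price: 0 for pairs {c_{1,i},c_{1,j}} and {c_{2,i},c_{2,j}}; M for pairs {c_{1,i},c_{2,i}}; for i ≠ j, price({c_{1,j},c_{2,i}}) = 1 if {i,j} is an edge of G and 0 otherwise; price({x,c_{1,i}}) = P and price({x,c_{2,i}}) = Q. Define the swap cost of a linear order Ô on C as the sum of the prices of all pairs whose relative order differs between O and Ô. Then for every U_1 ⊆ U, the minimum swap cost over all linear orders Ô in which the set of parties ranked above x is exactly {c_{1,i} : i ∈ U_1}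 ∪ {c_{2,i} : i ∈ U_1} equals |U_1|·(P+Q) + e(U_1, U∖U_1), where e(U_1, U∖U_1) denotes the number of edges of G with one endpoint in U_1 and the other in U∖U_1. -/
open Finset

namespace Stmt3

/-- Parties: `Sum.inl ()` is `x`; `Sum.inr (Sum.inl i)` is `c_{1,i}`;
`Sum.inr (Sum.inr i)` is `c_{2,i}`. -/
abbrev Party (n : ℕ) := Unit ⊕ (Fin (2 * n) ⊕ Fin (2 * n))

/-- A linear order on the `4n + 1` parties; `(O c).val + 1` is the position of `c`. -/
abbrev Ord (n : ℕ) := Party n ≃ Fin (4 * n + 1)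

/-- The (symmetric) price of an unordered pair of parties. -/
def price {n : ℕ} (G : SimpleGraph (Fin (2 * n))) [DecidableRel G.Adj] (P Q M : ℝ) :
    Party n → Party n → ℝ
  | Sum.inl _, Sum.inl _ => 0
  | Sum.inl _, Sum.inr (Sum.inl _) => P
  | Sum.inr (Sum.inl _), Sum.inl _ => P
  | Sum.inl _, Sum.inr (Sum.inr _) => Q
  | Sum.inr (Sum.inr _), Sum.inl _ => Q
  | Sum.inr (Sum.inl _), Sum.inr (Sum.inl _) => 0
  | Sum.inr (Sum.inr _), Sum.inr (Sum.inr _) => 0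
  | Sum.inr (Sum.inl i), Sum.inr (Sum.inr j) =>
      if i = j then M else if G.Adj i j then 1 else 0
  | Sum.inr (Sum.inr i), Sum.inr (Sum.inl j) =>
      if i = j then M else if G.Adj i j then 1 else 0

/-- Pairs whose relative order differs between `O` and `Ob`, oriented so that in each
pair `(x, y)` the party `y` is below `x` in `O` and above `x` in `Ob`. -/
def invPairs {n : ℕ} (O Ob : Ord n) : Finset (Party n × Party n) :=
  (Finset.univ : Finset (Party n × Party n)).filter
    fun q => O q.1 < O q.2 ∧ Ob q.2 < Ob q.1

/-- The swap cost of `Ob` relative to `O`: the sum of the prices of all pairs whose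
relative order differs between `O` and `Ob`. -/
noncomputable def swapCost {n : ℕ} (G : SimpleGraph (Fin (2 * n))) [DecidableRel G.Adj]
    (P Q M : ℝ) (O Ob : Ord n) : ℝ :=
  ∑ q ∈ invPairs O Ob, price G P Q M q.1 q.2


/-! ### Auxiliary machinery -/

/-- A key function realizing the optimal order: parties `c_{1,i}, c_{2,i}` with `i ∈ U1`
come first, then `x`, then the remaining parties. -/
def key {n : ℕ} (U1 : Finset (Fin (2 * n))) : Party n → ℕ
  | Sum.inl _ => 4 * n
  | Sum.inr (Sum.inl i) => if i ∈ U1 then i.val else 4 * n + 1 + i.val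
  | Sum.inr (Sum.inr i) => if i ∈ U1 then 2 * n + i.val else 6 * n + 1 + i.val

lemma key_inj {n : ℕ} (U1 : Finset (Fin (2 * n))) : Function.Injective (key U1) := by
  intro a b hab
  rcases a with _ | a | a <;> rcases b with _ | b | b <;>
    simp only [key] at hab <;>
    first
      | rfl
      | ((try have ha := a.isLt); (try have hb := b.isLt)
         split_ifs at hab <;>
           first
             | (exact congrArg _ (congrArg _ (Fin.ext (by omega))))
             | omega)

/-- The "essential cost" of a pair: a common lower bound for all admissible orders,
attained by the optimal one. -/
def hFun {n : ℕ} (G : SimpleGraph (Fin (2 * n))) [DecidableRel G.Adj] (P Q : ℝ)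
    (U1 : Finset (Fin (2 * n))) : Party n → Party n → ℝ
  | Sum.inl _, Sum.inr (Sum.inl i) => if i ∈ U1 then P else 0
  | Sum.inl _, Sum.inr (Sum.inr i) => if i ∈ U1 then Q else 0
  | Sum.inr (Sum.inl j), Sum.inr (Sum.inr i) =>
      if i ∈ U1 ∧ j ∉ U1 ∧ G.Adj i j then 1 else 0
  | _, _ => 0

lemma sum_hFun {n : ℕ} (G : SimpleGraph (Fin (2 * n))) [DecidableRel G.Adj] (P Q : ℝ)
    (U1 : Finset (Fin (2 * n))) :
    ∑ a : Party n, ∑ b : Party n, hFun G P Q U1 a b =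
      (U1.card : ℝ) * (P + Q) +
        ((Finset.univ.filter fun q : Fin (2 * n) × Fin (2 * n) =>
          q.1 ∈ U1 ∧ q.2 ∉ U1 ∧ G.Adj q.1 q.2).card : ℝ) := by
  have h1 : ∀ a : Party n, ∑ b : Party n, hFun G P Q U1 a b =
      match a with
      | Sum.inl _ => (U1.card : ℝ) * (P + Q)
      | Sum.inr (Sum.inl j) => ∑ i : Fin (2 * n),
          (if i ∈ U1 ∧ j ∉ U1 ∧ G.Adj i j then (1 : ℝ) else 0)
      | Sum.inr (Sum.inr _) => 0 := by
    intro a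
    rcases a with _ | j | j <;>
      simp [Fintype.sum_sum_type, hFun, Finset.sum_ite_mem, Finset.sum_const,
        mul_add, mul_comm]
    ring
  rw [Fintype.sum_sum_type]
  simp only [h1]
  rw [Fintype.sum_sum_type]
  simp only [Finset.sum_const, smul_zero, add_zero, Finset.sum_const_nat]
  congr 1
  · simp
  · rw [Finset.sum_comm, Finset.card_filter]
    push_cast
    rw [Fintype.sum_prod_type]

lemma price_nonneg {n : ℕ} (G : SimpleGraph (Fin (2 * n))) [DecidableRel G.Adj]
    (P Q M : ℝ) (hP : 0 ≤ P) (hQ : 0 ≤ Q) (hM : 0 ≤ M) (a b : Party n) :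
    0 ≤ price G P Q M a b := by
  rcases a with _ | a | a <;> rcases b with _ | b | b <;>
    simp only [price] <;> try split_ifs
  all_goals first | assumption | norm_num

set_option maxHeartbeats 1000000 in
lemma ite_eq_hFun {n : ℕ} (G : SimpleGraph (Fin (2 * n))) [DecidableRel G.Adj]
    (P Q M : ℝ) (U1 : Finset (Fin (2 * n))) (O Ob : Ord n)
    (hx : ((O (Sum.inl ())).val = 0))
    (hc1 : ∀ i : Fin (2 * n), ((O (Sum.inr (Sum.inl i))).val = 1 + i.val))
    (hc2 : ∀ i : Fin (2 * n), ((O (Sum.inr (Sum.inr i))).val = 1 + 2 * n + i.val))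
    (hOb : ∀ a b : Party n, Ob a < Ob b ↔ key U1 a < key U1 b)
    (a b : Party n) :
    (if O a < O b ∧ Ob b < Ob a then price G P Q M a b else 0) = hFun G P Q U1 a b := by
  have hO : ∀ a b : Party n, O a < O b ↔ (O a).val < (O b).val := fun a b => Fin.lt_def
  rcases a with _ | a | a <;> rcases b with _ | b | b <;>
    simp only [price, hFun, hO, hOb, key, hx, hc1, hc2]
  · simp
  · have hb := b.isLt
    split_ifs with h1 h2 h2 <;> first | rfl | (exfalso; revert h1; simp_all; omega)
  · have hb := b.isLt
    split_ifs with h1 h2 h2 <;> first | rfl | (exfalso; revert h1; simp_all; omega)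
  · have ha := a.isLt
    rw [if_neg]; omega
  · simp
  · have ha := a.isLt
    have hb := b.isLt
    by_cases hbU : b ∈ U1 <;> by_cases haU : a ∈ U1
    · rw [if_neg (by simp [hbU, haU]; omega), if_neg (by simp [haU])]
    · rw [if_pos ⟨by omega, by simp [hbU, haU]; omega⟩]
      have hab : ¬ a = b := by rintro rfl; exact haU hbU
      rw [if_neg hab]
      by_cases hadj : G.Adj b a
      · rw [if_pos (G.adj_symm hadj), if_pos ⟨hbU, haU, hadj⟩]
      · rw [if_neg (fun h => hadj (G.adj_symm h)), if_neg (by simp [hadj])]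
    · rw [if_neg (by simp [hbU, haU]; omega), if_neg (by simp [hbU])]
    · rw [if_neg (by simp [hbU, haU]; omega), if_neg (by simp [hbU])]
  · have ha := a.isLt
    rw [if_neg]; omega
  · have ha := a.isLt
    have hb := b.isLt
    rw [if_neg (by omega)]
  · simp

lemma hFun_le {n : ℕ} (G : SimpleGraph (Fin (2 * n))) [DecidableRel G.Adj]
    (P Q M : ℝ) (hP : 0 ≤ P) (hQ : 0 ≤ Q) (hM : 0 ≤ M)
    (U1 : Finset (Fin (2 * n))) (O Ob : Ord n)
    (hx : ((O (Sum.inl ())).val = 0))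
    (hc1 : ∀ i : Fin (2 * n), ((O (Sum.inr (Sum.inl i))).val = 1 + i.val))
    (hc2 : ∀ i : Fin (2 * n), ((O (Sum.inr (Sum.inr i))).val = 1 + 2 * n + i.val))
    (hAb : ∀ p : Party n, Ob p < Ob (Sum.inl ()) ↔
        ∃ i ∈ U1, p = Sum.inr (Sum.inl i) ∨ p = Sum.inr (Sum.inr i))
    (a b : Party n) :
    hFun G P Q U1 a b ≤ (if O a < O b ∧ Ob b < Ob a then price G P Q M a b else 0) := by
  have key : ∀ a b : Party n,
      (0:ℝ) ≤ (if O a < O b ∧ Ob b < Ob a then price G P Q M a b else 0) := by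
    intro a b
    split_ifs
    · exact price_nonneg G P Q M hP hQ hM a b
    · exact le_refl _
  rcases a with _ | a | a <;> rcases b with _ | b | b <;>
      simp only [hFun] <;> try exact key _ _
  · by_cases hbU : b ∈ U1
    · have hO : O (Sum.inl ()) < O (Sum.inr (Sum.inl b)) := by
        rw [Fin.lt_def, hx, hc1]; omega
      have hB := (hAb _).mpr ⟨b, hbU, Or.inl rfl⟩
      rw [if_pos hbU, if_pos ⟨hO, hB⟩]
      simp [price]
    · rw [if_neg hbU]; exact key _ _
  · by_cases hbU : b ∈ U1
    · have hO : O (Sum.inl ()) < O (Sum.inr (Sum.inr b)) := by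
        rw [Fin.lt_def, hx, hc2]; omega
      have hB := (hAb _).mpr ⟨b, hbU, Or.inr rfl⟩
      rw [if_pos hbU, if_pos ⟨hO, hB⟩]
      simp [price]
    · rw [if_neg hbU]; exact key _ _
  · by_cases hcross : b ∈ U1 ∧ a ∉ U1 ∧ G.Adj b a
    · obtain ⟨hbU, haU, hadj⟩ := hcross
      have h1 : Ob (Sum.inr (Sum.inr b)) < Ob (Sum.inl ()) :=
        (hAb _).mpr ⟨b, hbU, Or.inr rfl⟩
      have h2 : ¬ Ob (Sum.inr (Sum.inl a)) < Ob (Sum.inl ()) := by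
        rw [hAb]
        rintro ⟨i, hi, h | h⟩
        · obtain rfl : a = i := by injection h with h'; injection h'
          exact haU hi
        · exact absurd h (by simp)
      have hO : O (Sum.inr (Sum.inl a)) < O (Sum.inr (Sum.inr b)) := by
        have := a.isLt
        rw [Fin.lt_def, hc1, hc2]; omega
      rw [if_pos ⟨hbU, haU, hadj⟩, if_pos ⟨hO, lt_of_lt_of_le h1 (not_lt.mp h2)⟩]
      simp only [price]
      rw [if_neg (by rintro rfl; exact haU hbU), if_pos (G.adj_symm hadj)]
    · rw [if_neg hcross]; exact key _ _

lemma exists_sortingEquiv {α : Type*} [Fintype α] {k : ℕ} (f : α → ℕ)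
    (hf : Function.Injective f) (h : Fintype.card α = k) :
    ∃ e : α ≃ Fin k, ∀ a b : α, e a < e b ↔ f a < f b := by
  letI : LinearOrder α := LinearOrder.lift' f hf
  refine ⟨(monoEquivOfFin α h).symm.toEquiv, fun a b => ?_⟩
  rw [show ((monoEquivOfFin α h).symm.toEquiv a < (monoEquivOfFin α h).symm.toEquiv b) ↔ a < b
    from (monoEquivOfFin α h).symm.lt_iff_lt]
  constructor
  · intro hlt
    rcases lt_iff_le_not_ge.mp hlt with ⟨h1, h2⟩
    exact lt_iff_le_not_ge.mpr ⟨h1, h2⟩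
  · intro hlt
    rcases lt_iff_le_not_ge.mp hlt with ⟨h1, h2⟩
    exact lt_iff_le_not_ge.mpr ⟨h1, h2⟩

lemma swapCost_eq_sum {n : ℕ} (G : SimpleGraph (Fin (2 * n))) [DecidableRel G.Adj]
    (P Q M : ℝ) (O Ob : Ord n) :
    swapCost G P Q M O Ob =
      ∑ a : Party n, ∑ b : Party n,
        (if O a < O b ∧ Ob b < Ob a then price G P Q M a b else 0) := by
  rw [swapCost, invPairs, Finset.sum_filter, Fintype.sum_prod_type]

/-- with the initial order `x ≻ c_{1,1} ≻ ⋯ ≻ c_{1,2n} ≻ c_{2,1} ≻ ⋯ ≻ c_{2,2n}`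
and the prices above, the minimum swap cost over orders whose set of parties above `x`
is exactly `{c_{1,i}, c_{2,i} : i ∈ U₁}` equals `|U₁|·(P+Q)` plus the number of edges
of `G` crossing between `U₁` and its complement. -/
theorem stmt_3 (n : ℕ) (G : SimpleGraph (Fin (2 * n))) [DecidableRel G.Adj]
    (P Q M : ℝ) (hP : 0 ≤ P) (hQ : 0 ≤ Q) (hM : 0 ≤ M)
    (O : Ord n)
    (hx : ((O (Sum.inl ())).val = 0))
    (hc1 : ∀ i : Fin (2 * n), ((O (Sum.inr (Sum.inl i))).val = 1 + i.val))
    (hc2 : ∀ i : Fin (2 * n), ((O (Sum.inr (Sum.inr i))).val = 1 + 2 * n + i.val))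
    (U1 : Finset (Fin (2 * n))) :
    IsLeast
      { B : ℝ | ∃ Ob : Ord n,
          (∀ p : Party n, Ob p < Ob (Sum.inl ()) ↔
            ∃ i ∈ U1, p = Sum.inr (Sum.inl i) ∨ p = Sum.inr (Sum.inr i)) ∧
          B = swapCost G P Q M O Ob }
      ((U1.card : ℝ) * (P + Q) +
        ((Finset.univ.filter fun q : Fin (2 * n) × Fin (2 * n) =>
          q.1 ∈ U1 ∧ q.2 ∉ U1 ∧ G.Adj q.1 q.2).card : ℝ)) := by
  constructor
  · -- membership: the explicit optimal order
    have hcard : Fintype.card (Party n) = 4 * n + 1 := by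
      simp [Party]; omega
    obtain ⟨ObE, hOb⟩ := exists_sortingEquiv (key U1) (key_inj U1) hcard
    have hAb : ∀ p : Party n, ObE p < ObE (Sum.inl ()) ↔
        ∃ i ∈ U1, p = Sum.inr (Sum.inl i) ∨ p = Sum.inr (Sum.inr i) := by
      intro p
      rw [hOb]
      rcases p with _ | i | i
      · simp [key]
      · have := i.isLt
        simp only [key]
        constructor
        · intro h
          have hi : i ∈ U1 := by by_contra hi; rw [if_neg hi] at h; omega
          exact ⟨i, hi, Or.inl rfl⟩
        · rintro ⟨k, hk, h | h⟩
          · obtain rfl : i = k := by injection h with h'; injection h'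
            rw [if_pos hk]; omega
          · exact absurd h (by simp)
      · have := i.isLt
        simp only [key]
        constructor
        · intro h
          have hi : i ∈ U1 := by by_contra hi; rw [if_neg hi] at h; omega
          exact ⟨i, hi, Or.inr rfl⟩
        · rintro ⟨k, hk, h | h⟩
          · exact absurd h (by simp)
          · obtain rfl : i = k := by injection h with h'; injection h'
            rw [if_pos hk]; omega
    refine ⟨ObE, hAb, ?_⟩
    have hsw : swapCost G P Q M O ObE = ∑ a : Party n, ∑ b : Party n, hFun G P Q U1 a b := by
      rw [swapCost_eq_sum]
      exact Finset.sum_congr rfl fun a _ => Finset.sum_congr rfl fun b _ =>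
        ite_eq_hFun G P Q M U1 O ObE hx hc1 hc2 hOb a b
    rw [hsw, sum_hFun]
  · -- lower bound
    rintro B ⟨Ob', hAb', rfl⟩
    rw [← sum_hFun G P Q U1, swapCost_eq_sum]
    exact Finset.sum_le_sum fun a _ => Finset.sum_le_sum fun b _ =>
      hFun_le G P Q M hP hQ hM U1 O Ob' hx hc1 hc2 hAb' a b

end Stmt3
end

section
/- Let C be a finite set of m parties, c_1 ∈ C, S ⊆ C∖{c_1} with |S| = ℓ, and let k_1 be an integer with ℓ ≤ k_1 ≤ m−1. For an integer v, there exists a linear order O on C with pos(O,c_1) = m−k_1 and every member of S ranked below c_1 such that Borda(O,S) = v, if and only if ℓ(ℓ−1)/2 ≤ v ≤ ℓ·k_1 − ℓ(ℓ+1)/2. -/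
/-!
Once `c₁` sits at Borda score `k₁`, the parties of `S` below it receive distinct scores in
`{0, …, k₁ - 1}`, and every `ℓ`-subset of these scores is realised by some order. The attainable
values of `Borda(O,S)` are therefore the sums of `ℓ`-subsets of `{0, …, k₁ - 1}`, which fill the
whole interval from the sum `0 + ⋯ + (ℓ - 1)` of the bottom `ℓ` elements to the sum
`(k₁ - ℓ) + ⋯ + (k₁ - 1)` of the top `ℓ`.
-/

open Finset

namespace Stmt4

/-- The Borda score of party `c` under the linear order `O`:
`Borda(O,c) = m − pos(O,c)`, where `pos(O,c) = (O c).val + 1`. -/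
def borda {C : Type*} [Fintype C] (O : C ≃ Fin (Fintype.card C)) (c : C) : ℕ :=
  Fintype.card C - 1 - (O c).val

/-- The total Borda score of a set `S` of parties. -/
def bordaSum {C : Type*} [Fintype C] (O : C ≃ Fin (Fintype.card C)) (S : Finset C) : ℕ :=
  ∑ c ∈ S, borda O c

theorem natCast_sum_range_id (n : ℕ) : ((∑ i ∈ range n, i : ℕ) : ℤ) = n * (n - 1) / 2 := by
  rcases n with _ | n
  · simp
  · have h := congrArg (Nat.cast : ℕ → ℤ) (sum_range_id_mul_two (n + 1))
    rw [Int.ediv_eq_of_eq_mul_left two_ne_zero]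
    push_cast at h ⊢
    linarith

theorem sum_range_id_le_sum_of_card_eq {T : Finset ℕ} {ℓ : ℕ} (h : #T = ℓ) :
    ∑ i ∈ range ℓ, i ≤ ∑ t ∈ T, t := by
  subst h
  induction T using Finset.induction_on_max with
  | empty => simp
  | insert a T ha ih =>
    have haT : a ∉ T := fun h => (ha a h).false
    have hTa : #T ≤ a := by
      simpa using card_le_card (fun x hx => mem_range.2 (ha x hx) : T ⊆ range a)
    rw [card_insert_of_notMem haT, sum_range_succ, sum_insert haT]
    omega

theorem sum_range_id_add_sum_range_succ_id (ℓ : ℕ) :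
    ∑ i ∈ range ℓ, i + ∑ i ∈ range (ℓ + 1), i = ℓ * ℓ := by
  induction ℓ with
  | zero => simp
  | succ ℓ ih =>
    simp only [sum_range_succ] at ih ⊢
    nlinarith

theorem sum_add_sum_range_succ_id_le_of_subset_range {T : Finset ℕ} {ℓ k : ℕ}
    (hT : T ⊆ range k) (h : #T = ℓ) :
    ∑ t ∈ T, t + ∑ i ∈ range (ℓ + 1), i ≤ ℓ * k := by
  have hlt : ∀ t ∈ T, t < k := fun t ht => mem_range.1 (hT ht)
  have hinj : Set.InjOn (fun t => k - 1 - t) T := fun a ha b hb hab => by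
    have := hlt a ha; have := hlt b hb; simp only at hab; omega
  -- the reflection `t ↦ k - 1 - t` turns the lower bound into the upper one
  have hreflected := sum_range_id_le_sum_of_card_eq ((card_image_of_injOn hinj).trans h)
  rw [sum_image hinj] at hreflected
  have hpair : ∑ t ∈ T, (t + (k - 1 - t) + 1) = ℓ * k := by
    rw [sum_congr rfl fun t ht => (by have := hlt t ht; omega : t + (k - 1 - t) + 1 = k),
      sum_const, h, smul_eq_mul]
  rw [sum_add_distrib, sum_add_distrib, sum_const, h, smul_eq_mul, mul_one] at hpair
  rw [sum_range_succ]
  omega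

theorem exists_subset_range_card_sum_eq {ℓ k v : ℕ} (hlow : ∑ i ∈ range ℓ, i ≤ v)
    (hhigh : v + ∑ i ∈ range (ℓ + 1), i ≤ ℓ * k) :
    ∃ T ⊆ range k, #T = ℓ ∧ ∑ t ∈ T, t = v := by
  induction ℓ generalizing k v with
  | zero => exact ⟨∅, empty_subset _, rfl, by simp at hhigh ⊢; omega⟩
  | succ ℓ ih =>
    have hsq := sum_range_id_add_sum_range_succ_id ℓ
    rw [sum_range_succ] at hlow
    rw [sum_range_succ, sum_range_succ] at hhigh
    rcases k with _ | k
    · simp at hhigh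
    -- the largest element `t` is taken as large as the remaining `ℓ` elements allow
    obtain ⟨t, htk, htv, hlow', hhigh'⟩ : ∃ t ≤ k, t ≤ v ∧ ∑ i ∈ range ℓ, i ≤ v - t ∧
        v - t + ∑ i ∈ range (ℓ + 1), i ≤ ℓ * t := by
      rcases le_total k (v - ∑ i ∈ range ℓ, i) with hk | hk
      · refine ⟨k, le_rfl, by omega, by omega, ?_⟩
        have : (ℓ + 1) * (k + 1) = ℓ * k + ℓ + k + 1 := by ring
        rw [sum_range_succ]
        omega
      · refine ⟨v - ∑ i ∈ range ℓ, i, hk, by omega, by omega, ?_⟩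
        have : ℓ * ℓ ≤ ℓ * (v - ∑ i ∈ range ℓ, i) := Nat.mul_le_mul_left ℓ (by omega)
        omega
    obtain ⟨T, hTt, hcard, hsum⟩ := ih hlow' hhigh'
    have htT : t ∉ T := fun h => by simpa using hTt h
    refine ⟨insert t T, insert_subset (mem_range.2 (by omega)) (hTt.trans ?_), ?_, ?_⟩
    · exact range_subset_range.2 (by omega)
    · rw [card_insert_of_notMem htT, hcard]
    · rw [sum_insert htT, hsum]
      omega

theorem exists_subset_range_card_sum_eq_iff {ℓ k v : ℕ} :
    (∃ T ⊆ range k, #T = ℓ ∧ ∑ t ∈ T, t = v) ↔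
      ∑ i ∈ range ℓ, i ≤ v ∧ v + ∑ i ∈ range (ℓ + 1), i ≤ ℓ * k := by
  refine ⟨?_, fun h => exists_subset_range_card_sum_eq h.1 h.2⟩
  rintro ⟨T, hT, hcard, rfl⟩
  exact ⟨sum_range_id_le_sum_of_card_eq hcard, sum_add_sum_range_succ_id_le_of_subset_range hT hcard⟩

section Borda

variable {C : Type*} [Fintype C]

theorem borda_eq_val_rev (O : C ≃ Fin (Fintype.card C)) (c : C) :
    borda O c = ((O c).rev : ℕ) := by
  rw [borda, Fin.val_rev]
  omega

theorem borda_lt_borda_iff (O : C ≃ Fin (Fintype.card C)) {a b : C} :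
    borda O a < borda O b ↔ O b < O a := by
  rw [borda_eq_val_rev, borda_eq_val_rev, ← Fin.lt_def, Fin.rev_lt_rev]

theorem borda_injective (O : C ≃ Fin (Fintype.card C)) : Function.Injective (borda O) :=
  fun a b h => by
    simpa only [borda_eq_val_rev, Fin.val_inj, Fin.rev_inj, O.apply_eq_iff_eq] using h

theorem borda_eq_iff (O : C ≃ Fin (Fintype.card C)) (c : C) {k : ℕ}
    (hk : k < Fintype.card C) : borda O c = k ↔ (O c : ℕ) + 1 = Fintype.card C - k := by
  have := (O c).isLt
  rw [borda]
  omega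

theorem exists_borda_eq_on (s : Finset C) {b : C → ℕ} (hinj : Set.InjOn b s)
    (hlt : ∀ c ∈ s, b c < Fintype.card C) :
    ∃ O : C ≃ Fin (Fintype.card C), ∀ c ∈ s, borda O c = b c := by
  obtain ⟨g, hg⟩ := exists_equiv_extend_of_card_eq (t := range (Fintype.card C))
    (card_range _).symm (image_subset_iff.2 fun c hc => mem_range.2 (hlt c hc)) hinj
  let toFin : range (Fintype.card C) ≃ Fin (Fintype.card C) :=
    (Equiv.subtypeEquivRight fun _ => mem_range).trans Fin.equivSubtype.symm
  refine ⟨(g.trans toFin).trans Fin.revPerm, fun c hc => ?_⟩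
  simp [borda_eq_val_rev, toFin, hg c hc]

theorem exists_borda_eq_iff_exists_subset_range {c₁ : C} {S : Finset C} (hc₁S : c₁ ∉ S)
    {k : ℕ} (hk : k < Fintype.card C) (v : ℕ) :
    (∃ O : C ≃ Fin (Fintype.card C),
        borda O c₁ = k ∧ (∀ c ∈ S, borda O c < k) ∧ bordaSum O S = v) ↔
      ∃ T ⊆ range k, #T = #S ∧ ∑ t ∈ T, t = v := by
  classical
  constructor
  · rintro ⟨O, -, hlt, rfl⟩
    have hinj : Set.InjOn (borda O) S := (borda_injective O).injOn
    refine ⟨S.image (borda O), ?_, card_image_of_injOn hinj, sum_image hinj⟩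
    simpa [image_subset_iff] using hlt
  · rintro ⟨T, hT, hcard, rfl⟩
    obtain ⟨b, hb⟩ := S.finite_toSet.exists_bijOn_of_encard_eq
      (t := (T : Set ℕ)) (by simp [hcard])
    have hbS : ∀ c ∈ S, Function.update b c₁ k c = b c := fun c hc =>
      Function.update_of_ne (ne_of_mem_of_not_mem hc hc₁S) _ _
    have hbT : ∀ c ∈ S, b c < k := fun c hc => mem_range.1 (hT (hb.mapsTo hc))
    have hinj : Set.InjOn (Function.update b c₁ k) ↑(insert c₁ S) := by
      rw [coe_insert, Set.injOn_insert (by simpa using hc₁S)]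
      refine ⟨hb.injOn.congr fun c hc => (hbS c hc).symm, ?_⟩
      rintro ⟨c, hc, hck⟩
      rw [Function.update_self, hbS c hc] at hck
      exact (hbT c hc).ne hck
    have hlt : ∀ c ∈ insert c₁ S, Function.update b c₁ k c < Fintype.card C := by
      intro c hc
      rcases mem_insert.1 hc with rfl | hc
      · simpa using hk
      · rw [hbS c hc]
        exact (hbT c hc).trans hk
    obtain ⟨O, hO⟩ := exists_borda_eq_on (insert c₁ S) hinj hlt
    refine ⟨O, by simpa using hO c₁ (mem_insert_self _ _), fun c hc => ?_, ?_⟩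
    · rw [hO c (mem_insert_of_mem hc), hbS c hc]
      exact hbT c hc
    · refine sum_nbij b (fun c hc => hb.mapsTo hc) hb.injOn hb.surjOn fun c hc => ?_
      rw [hO c (mem_insert_of_mem hc), hbS c hc]

end Borda

theorem stmt_4_general {C : Type*} [Fintype C] (c1 : C) (S : Finset C)
    (hc1S : c1 ∉ S) (ℓ k1 : ℕ) (hS : S.card = ℓ)
    (hk1 : k1 ≤ Fintype.card C - 1) (v : ℤ) :
    (∃ O : C ≃ Fin (Fintype.card C),
        (O c1).val + 1 = Fintype.card C - k1 ∧
        (∀ c ∈ S, O c1 < O c) ∧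
        (bordaSum O S : ℤ) = v) ↔
      ((ℓ : ℤ) * ((ℓ : ℤ) - 1)) / 2 ≤ v ∧
        v ≤ (ℓ : ℤ) * (k1 : ℤ) - ((ℓ : ℤ) * ((ℓ : ℤ) + 1)) / 2 := by
  have hk : k1 < Fintype.card C := by
    have := Fintype.card_pos_iff.2 ⟨c1⟩
    omega
  have hposition_iff (O : C ≃ Fin (Fintype.card C)) :
      ((O c1 : ℕ) + 1 = Fintype.card C - k1 ∧ ∀ c ∈ S, O c1 < O c) ↔
        (borda O c1 = k1 ∧ ∀ c ∈ S, borda O c < k1) := by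
    rw [← borda_eq_iff O c1 hk]
    refine and_congr_right fun h => forall₂_congr fun c _ => ?_
    rw [← h, borda_lt_borda_iff]
  rw [← natCast_sum_range_id,
    show (ℓ : ℤ) * (ℓ + 1) = ((ℓ + 1 : ℕ) : ℤ) * ((ℓ + 1 : ℕ) - 1) by push_cast; ring,
    ← natCast_sum_range_id]
  have hbounds (n : ℕ) : (∃ T ⊆ range k1, #T = #S ∧ ∑ t ∈ T, t = n) ↔
      ((∑ i ∈ range ℓ, i : ℕ) : ℤ) ≤ n ∧ n ≤ ℓ * k1 - ((∑ i ∈ range (ℓ + 1), i : ℕ) : ℤ) := by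
    rw [hS, exists_subset_range_card_sum_eq_iff, le_sub_iff_add_le]
    norm_cast
  constructor
  · rintro ⟨O, hc1, hbelow, rfl⟩
    obtain ⟨hc1', hbelow'⟩ := (hposition_iff O).1 ⟨hc1, hbelow⟩
    exact (hbounds _).1 <| (exists_borda_eq_iff_exists_subset_range hc1S hk _).1
      ⟨O, hc1', hbelow', rfl⟩
  · intro hv
    lift v to ℕ using (Nat.cast_nonneg _).trans hv.1
    obtain ⟨O, hc1, hbelow, hsum⟩ :=
      (exists_borda_eq_iff_exists_subset_range hc1S hk v).2 ((hbounds v).2 hv)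
    obtain ⟨hc1', hbelow'⟩ := (hposition_iff O).2 ⟨hc1, hbelow⟩
    exact ⟨O, hc1', hbelow', by rw [hsum]⟩

/-- with `pos(O,c₁) = m − k₁` and all of `S` (of size `ℓ ≤ k₁`) below `c₁`,
the attainable values of `Borda(O,S)` are exactly the integers in
`[ℓ(ℓ−1)/2, ℓ·k₁ − ℓ(ℓ+1)/2]`. -/
theorem stmt_4 {C : Type*} [Fintype C] [DecidableEq C] (c1 : C) (S : Finset C)
    (hc1S : c1 ∉ S) (ℓ k1 : ℕ) (hS : S.card = ℓ)
    (hlk : ℓ ≤ k1) (hk1 : k1 ≤ Fintype.card C - 1) (v : ℤ) :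
    (∃ O : C ≃ Fin (Fintype.card C),
        (O c1).val + 1 = Fintype.card C - k1 ∧
        (∀ c ∈ S, O c1 < O c) ∧
        (bordaSum O S : ℤ) = v) ↔
      ((ℓ : ℤ) * ((ℓ : ℤ) - 1)) / 2 ≤ v ∧
        v ≤ (ℓ : ℤ) * (k1 : ℤ) - ((ℓ : ℤ) * ((ℓ : ℤ) + 1)) / 2 :=
  stmt_4_general c1 S hc1S ℓ k1 hS hk1 v

end Stmt4
end

section
/- Let C be a finite set of m parties, c_1 ∈ C, S ⊆ C∖{c_1} with |S| = ℓ, and let k_1 be an integer with 0 ≤ k_1 ≤ m−1 and ℓ ≤ m−1−k_1. For an integer v, there exists a linear order O on C with pos(O,c_1) = m−k_1 and every member of S ranked above c_1 such that Borda(O,S) = v, if and only if ℓ·k_1 + ℓ(ℓ+1)/2 ≤ v ≤ ℓ·m − ℓ(ℓ+1)/2. -/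
/-!
Reversing the order turns Borda scores into ranks counted from the bottom: `c₁` gets rank `k₁`
and `S` occupies `ℓ` distinct ranks in `[k₁ + 1, m - 1]`, and any such set of ranks occurs.
So the attainable values are the sums of `ℓ`-element subsets of an integer interval `[a, b]`,
which are exactly the integers between the sum of the `ℓ` smallest and of the `ℓ` largest
elements. The lower bound follows by peeling off the minimum, the upper one by negation; an
intermediate value `s` is reached by induction on `ℓ`: either the `ℓ - 1` smallest elements
plus one free element work, or `b` is taken and the rest is found in `[a, b - 1]`.
-/

open Finset

namespace Stmt5

/-- The Borda score of party `c` under the linear order `O`: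
`Borda(O,c) = m − pos(O,c)`, where `pos(O,c) = (O c).val + 1`. -/
def borda {C : Type*} [Fintype C] (O : C ≃ Fin (Fintype.card C)) (c : C) : ℕ :=
  Fintype.card C - 1 - (O c).val

/-- The total Borda score of a set `S` of parties. -/
def bordaSum {C : Type*} [Fintype C] (O : C ≃ Fin (Fintype.card C)) (S : Finset C) : ℕ :=
  ∑ c ∈ S, borda O c

theorem sum_range_add_le_sum {B : Finset ℤ} {a : ℤ} (h : ∀ x ∈ B, a ≤ x) :
    ∑ i ∈ range #B, (a + i) ≤ ∑ x ∈ B, x := by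
  induction B using Finset.induction_on_min generalizing a with
  | empty => simp
  | insert b B hbB ih =>
    have hb : b ∉ B := fun hb => (hbB b hb).false
    calc ∑ i ∈ range #(insert b B), (a + i)
        = ∑ i ∈ range #B, (a + 1 + i) + a := by
          rw [card_insert_of_notMem hb, sum_range_succ', Nat.cast_zero, add_zero]
          exact congrArg (· + a) (sum_congr rfl fun i _ => by push_cast; ring)
      _ ≤ ∑ i ∈ range #B, (b + 1 + i) + b := by
          have hab : a ≤ b := h b (mem_insert_self b B)
          gcongr
      _ ≤ ∑ x ∈ insert b B, x := by
          rw [sum_insert hb, add_comm b (∑ x ∈ B, x)]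
          gcongr
          exact ih hbB

theorem sum_le_sum_range_sub {B : Finset ℤ} {b : ℤ} (h : ∀ x ∈ B, x ≤ b) :
    ∑ x ∈ B, x ≤ ∑ i ∈ range #B, (b - i) := by
  have key := sum_range_add_le_sum (B := B.image Neg.neg) (a := -b) (by simpa using h)
  rw [card_image_of_injective _ neg_injective, sum_image neg_injective.injOn,
    sum_neg_distrib] at key
  have hneg : ∑ i ∈ range #B, (-b + i) = -∑ i ∈ range #B, (b - i) := by
    rw [← sum_neg_distrib]
    exact sum_congr rfl fun _ _ => by ring
  linarith

theorem exists_subset_Icc_card_sum_eq {a b s : ℤ} {n : ℕ} (hn : (n : ℤ) ≤ b - a + 1)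
    (hlo : ∑ i ∈ range n, (a + i) ≤ s) (hhi : s ≤ ∑ i ∈ range n, (b - i)) :
    ∃ B ⊆ Icc a b, #B = n ∧ ∑ x ∈ B, x = s := by
  induction n generalizing b s with
  | zero => exact ⟨∅, empty_subset _, rfl, by simpa using le_antisymm hlo hhi⟩
  | succ n ih =>
    rw [sum_range_succ] at hlo
    rw [sum_range_succ'] at hhi
    simp only [Nat.cast_add, Nat.cast_one, Nat.cast_zero, sub_zero, sub_add_eq_sub_sub_swap]
      at hn hlo hhi
    by_cases hx : s - ∑ i ∈ range n, (a + i) ≤ b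
    · set x := s - ∑ i ∈ range n, (a + i)
      have hinj : Function.Injective (fun i : ℕ => a + i) := fun i j h => by simpa using h
      have hxI : x ∉ (range n).image (fun i : ℕ => a + i) := by
        simp only [mem_image, mem_range, not_exists, not_and]
        intro i hi hix
        omega
      refine ⟨insert x ((range n).image (fun i : ℕ => a + i)), ?_, ?_, ?_⟩
      · refine insert_subset (mem_Icc.mpr ⟨by linarith, hx⟩) fun y hy => ?_
        obtain ⟨i, hi, rfl⟩ := mem_image.mp hy
        rw [mem_range] at hi
        exact mem_Icc.mpr ⟨by omega, by omega⟩
      · rw [card_insert_of_notMem hxI, card_image_of_injective _ hinj, card_range]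
      · rw [sum_insert hxI, sum_image hinj.injOn]
        ring
    · obtain ⟨B, hBsub, hBcard, hBsum⟩ := ih (b := b - 1) (s := s - b) (by omega) (by linarith)
        (by linarith)
      have hbB : b ∉ B := fun hb => by simpa using hBsub hb
      refine ⟨insert b B, ?_, by rw [card_insert_of_notMem hbB, hBcard], ?_⟩
      · exact insert_subset (mem_Icc.mpr ⟨by omega, le_rfl⟩)
          (hBsub.trans (Icc_subset_Icc_right (by linarith)))
      · rw [sum_insert hbB, hBsum]; ring

theorem exists_subset_Icc_card_sum_eq_iff {a b s : ℤ} {n : ℕ} (hn : (n : ℤ) ≤ b - a + 1) :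
    (∃ B ⊆ Icc a b, #B = n ∧ ∑ x ∈ B, x = s) ↔
      ∑ i ∈ range n, (a + i) ≤ s ∧ s ≤ ∑ i ∈ range n, (b - i) := by
  refine ⟨?_, fun h => exists_subset_Icc_card_sum_eq hn h.1 h.2⟩
  rintro ⟨B, hB, rfl, rfl⟩
  exact ⟨sum_range_add_le_sum fun x hx => (mem_Icc.mp (hB hx)).1,
    sum_le_sum_range_sub fun x hx => (mem_Icc.mp (hB hx)).2⟩

theorem two_mul_sum_range_add_one (n : ℕ) :
    2 * ∑ i ∈ range n, ((i : ℤ) + 1) = n * (n + 1) := by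
  induction n with
  | zero => simp
  | succ n ih => rw [sum_range_succ, mul_add, ih]; push_cast; ring

theorem sum_range_add_eq (a : ℤ) (n : ℕ) :
    ∑ i ∈ range n, (a + i) = n * (a - 1) + n * (n + 1) / 2 := by
  rw [← two_mul_sum_range_add_one, Int.mul_ediv_cancel_left _ two_ne_zero]
  simp only [sum_add_distrib, sum_const, card_range, nsmul_eq_mul]
  ring

theorem sum_range_sub_eq (b : ℤ) (n : ℕ) :
    ∑ i ∈ range n, (b - i) = n * (b + 1) - n * (n + 1) / 2 := by
  rw [← two_mul_sum_range_add_one, Int.mul_ediv_cancel_left _ two_ne_zero]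
  simp only [sum_add_distrib, sum_sub_distrib, sum_const, card_range, nsmul_eq_mul]
  ring

theorem exists_equiv_apply_eq_image_eq {α β : Type*} [Fintype α] [Fintype β] [DecidableEq β]
    (h : Fintype.card α = Fintype.card β) {s : Finset α} {a : α} (ha : a ∉ s)
    {t : Finset β} {b : β} (hb : b ∉ t) (hst : #s = #t) :
    ∃ e : α ≃ β, e a = b ∧ s.image e = t := by
  classical
  obtain ⟨e₀⟩ : Nonempty (s ≃ t) := Fintype.card_eq.mp (by simpa using hst)
  let f : α → β := fun x => if hx : x ∈ s then e₀ ⟨x, hx⟩ else b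
  have hfs : ∀ x (hx : x ∈ s), f x = e₀ ⟨x, hx⟩ := fun x hx => dif_pos hx
  have hfa : f a = b := dif_neg ha
  have hft : ∀ x ∈ s, f x ∈ t := fun x hx => hfs x hx ▸ (e₀ ⟨x, hx⟩).2
  have hinj : Set.InjOn f ↑(insert a s) := by
    rintro x hx y hy hxy
    simp only [coe_insert, Set.mem_insert_iff, mem_coe] at hx hy
    rcases hx with rfl | hx <;> rcases hy with rfl | hy
    · rfl
    · exact absurd (hxy ▸ hft y hy) (hfa ▸ hb)
    · exact absurd (hxy ▸ hft x hx) (hfa ▸ hb)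
    · rw [hfs x hx, hfs y hy] at hxy
      exact congrArg Subtype.val (e₀.injective (Subtype.ext hxy))
  obtain ⟨g, hg⟩ := exists_equiv_extend_of_card_eq (t := univ) (by simpa using h)
    (subset_univ _) hinj
  let e := g.trans (Equiv.subtypeUnivEquiv mem_univ)
  have he : ∀ x ∈ insert a s, e x = f x := hg
  refine ⟨e, by rw [he a (mem_insert_self a s), hfa], ?_⟩
  refine eq_of_subset_of_card_le (fun y hy => ?_)
    (by rw [card_image_of_injective _ e.injective, hst])
  obtain ⟨x, hx, rfl⟩ := mem_image.mp hy
  rw [he x (mem_insert_of_mem hx), hfs x hx]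
  exact (e₀ ⟨x, hx⟩).2

theorem exists_equiv_sum_val_eq_iff {C : Type*} [Fintype C] {c1 : C}
    {S : Finset C} (hc1S : c1 ∉ S) {k : ℕ} (hk : k < Fintype.card C) (v : ℤ) :
    (∃ R : C ≃ Fin (Fintype.card C), (R c1 : ℕ) = k ∧ (∀ c ∈ S, R c1 < R c) ∧
        ∑ c ∈ S, ((R c : ℕ) : ℤ) = v) ↔
      ∃ B ⊆ Icc ((k : ℤ) + 1) (Fintype.card C - 1), #B = #S ∧ ∑ x ∈ B, x = v := by
  let ι : Fin (Fintype.card C) → ℤ := fun i => (i : ℕ)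
  have hι : Function.Injective ι := fun i j h => Fin.ext (by simpa [ι] using h)
  constructor
  · rintro ⟨R, hR1, hRS, rfl⟩
    have hιR : Function.Injective (ι ∘ R) := hι.comp R.injective
    refine ⟨S.image (ι ∘ R), fun y hy => ?_, card_image_of_injective _ hιR,
      sum_image hιR.injOn⟩
    obtain ⟨c, hc, rfl⟩ := mem_image.mp hy
    have hlt : (R c1 : ℕ) < R c := hRS c hc
    have hlt' : (R c : ℕ) < Fintype.card C := (R c).isLt
    exact mem_Icc.mpr ⟨by simp only [Function.comp_apply, ι]; omega,
      by simp only [Function.comp_apply, ι]; omega⟩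
  · rintro ⟨B, hB, hBcard, rfl⟩
    have hBι : B ⊆ univ.image ι := fun x hx => by
      have := mem_Icc.mp (hB hx)
      exact mem_image.mpr ⟨⟨x.toNat, by omega⟩, mem_univ _, by simp only [ι]; omega⟩
    obtain ⟨T, -, rfl⟩ := subset_image_iff.mp hBι
    have hkT : (⟨k, hk⟩ : Fin (Fintype.card C)) ∉ T := fun h => by
      simpa [ι] using hB (mem_image_of_mem ι h)
    obtain ⟨R, hR1, hRS⟩ := exists_equiv_apply_eq_image_eq
      (Fintype.card_fin _).symm hc1S hkT (by rw [← hBcard, card_image_of_injective _ hι])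
    refine ⟨R, by rw [hR1], fun c hc => ?_, ?_⟩
    · have hcT : R c ∈ T := hRS ▸ mem_image_of_mem R hc
      have hkc : (k : ℤ) + 1 ≤ (R c : ℕ) := (mem_Icc.mp (hB (mem_image_of_mem ι hcT))).1
      rw [hR1, Fin.lt_def]
      show k < (R c : ℕ)
      omega
    · rw [← sum_image (f := ι) R.injective.injOn, hRS, sum_image hι.injOn]

theorem borda_eq_val_rev {C : Type*} [Fintype C] (O : C ≃ Fin (Fintype.card C)) (c : C) :
    borda O c = (Fin.rev (O c) : ℕ) := by
  rw [borda, Fin.val_rev]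
  omega

theorem exists_borda_iff_exists_rank {C : Type*} [Fintype C] (c1 : C) (S : Finset C) {k : ℕ}
    (hk : k < Fintype.card C) (v : ℤ) :
    (∃ O : C ≃ Fin (Fintype.card C), (O c1).val + 1 = Fintype.card C - k ∧
        (∀ c ∈ S, O c < O c1) ∧ (bordaSum O S : ℤ) = v) ↔
      ∃ R : C ≃ Fin (Fintype.card C), (R c1 : ℕ) = k ∧ (∀ c ∈ S, R c1 < R c) ∧
        ∑ c ∈ S, ((R c : ℕ) : ℤ) = v := by
  have key : ∀ O : C ≃ Fin (Fintype.card C),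
      ((O c1).val + 1 = Fintype.card C - k ↔ (Fin.rev (O c1) : ℕ) = k) ∧
      ((∀ c ∈ S, O c < O c1) ↔ ∀ c ∈ S, Fin.rev (O c1) < Fin.rev (O c)) ∧
      ((bordaSum O S : ℤ) = ∑ c ∈ S, ((Fin.rev (O c) : ℕ) : ℤ)) := fun O => by
    refine ⟨by have := (O c1).isLt; rw [Fin.val_rev]; omega, by simp only [Fin.rev_lt_rev], ?_⟩
    simp only [bordaSum, borda_eq_val_rev, Nat.cast_sum]
  constructor
  · rintro ⟨O, h1, hS, hv⟩
    obtain ⟨hpos, hbelow, hsum⟩ := key O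
    exact ⟨O.trans Fin.revPerm, hpos.mp h1, hbelow.mp hS, hsum ▸ hv⟩
  · rintro ⟨R, h1, hS, hv⟩
    obtain ⟨hpos, hbelow, hsum⟩ := key (R.trans Fin.revPerm)
    simp only [Equiv.trans_apply, Fin.revPerm_apply, Fin.rev_rev] at hpos hbelow hsum
    exact ⟨R.trans Fin.revPerm, hpos.mpr h1, hbelow.mpr hS, hsum.trans hv⟩

theorem stmt_5_general {C : Type*} [Fintype C] (c1 : C) (S : Finset C)
    (hc1S : c1 ∉ S) (ℓ k1 : ℕ) (hS : S.card = ℓ)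
    (hk1 : k1 ≤ Fintype.card C - 1) (hl : ℓ ≤ Fintype.card C - 1 - k1) (v : ℤ) :
    (∃ O : C ≃ Fin (Fintype.card C),
        (O c1).val + 1 = Fintype.card C - k1 ∧
        (∀ c ∈ S, O c < O c1) ∧
        (bordaSum O S : ℤ) = v) ↔
      ((ℓ : ℤ) * (k1 : ℤ) + ((ℓ : ℤ) * ((ℓ : ℤ) + 1)) / 2 ≤ v ∧
        v ≤ (ℓ : ℤ) * (Fintype.card C : ℤ) - ((ℓ : ℤ) * ((ℓ : ℤ) + 1)) / 2) := by
  have hk : k1 < Fintype.card C := by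
    have := Fintype.card_pos_iff.mpr ⟨c1⟩
    omega
  rw [exists_borda_iff_exists_rank c1 S hk, exists_equiv_sum_val_eq_iff hc1S hk, hS,
    exists_subset_Icc_card_sum_eq_iff (by omega), sum_range_add_eq, sum_range_sub_eq,
    add_sub_cancel_right, sub_add_cancel]

/-- with `pos(O,c₁) = m − k₁` and all of `S` (of size `ℓ ≤ m−1−k₁`) above `c₁`,
the attainable values of `Borda(O,S)` are exactly the integers in
`[ℓ·k₁ + ℓ(ℓ+1)/2, ℓ·m − ℓ(ℓ+1)/2]`. -/
theorem stmt_5 {C : Type*} [Fintype C] [DecidableEq C] (c1 : C) (S : Finset C)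
    (hc1S : c1 ∉ S) (ℓ k1 : ℕ) (hS : S.card = ℓ)
    (hk1 : k1 ≤ Fintype.card C - 1) (hl : ℓ ≤ Fintype.card C - 1 - k1) (v : ℤ) :
    (∃ O : C ≃ Fin (Fintype.card C),
        (O c1).val + 1 = Fintype.card C - k1 ∧
        (∀ c ∈ S, O c < O c1) ∧
        (bordaSum O S : ℤ) = v) ↔
      ((ℓ : ℤ) * (k1 : ℤ) + ((ℓ : ℤ) * ((ℓ : ℤ) + 1)) / 2 ≤ v ∧
        v ≤ (ℓ : ℤ) * (Fintype.card C : ℤ) - ((ℓ : ℤ) * ((ℓ : ℤ) + 1)) / 2) :=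
  stmt_5_general c1 S hc1S ℓ k1 hS hk1 hl v

end Stmt5
end

section
/- Let C be a finite set of m parties, c_1 ∈ C, and A₋₁ ⊆ C∖{c_1} with |A₋₁| = a, and let k_1, k_A be integers with 0 ≤ k_1 ≤ m−1. There exists a linear order O on C with Borda(O,c_1) = k_1 and Borda(O,A₋₁) = k_A if and only if there exist nonnegative integers ℓ↓, ℓ↑ such that: ℓ↓ + ℓ↑ = a; ℓ↓ ≤ k_1; ℓ↑ ≤ m−1−k_1; and ℓ↓(ℓ↓−1)/2 + ℓ↑·k_1 + ℓ↑(ℓ↑+1)/2 ≤ k_A ≤ ℓ↓·k_1 − ℓ↓(ℓ↓+1)/2 + ℓ↑·m − ℓ↑(ℓ↑+1)/2. -/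
/-! Under a linear order the Borda scores are a bijection onto `{0, …, m - 1}`, so `(k₁, k_A)` is
attainable exactly when some `a`-subset of `{0, …, m - 1} ∖ {k₁}` has sum `k_A`. Such a subset splits
into `ℓ↓` scores in `[0, k₁)` and `ℓ↑` scores in `[k₁ + 1, m)`, and the sums of the `n`-subsets of an
interval `[L, K)` are exactly the integers from `n L + C(n, 2)` to `n K - C(n + 1, 2)`: every
intermediate value is reached by taking the largest element as large as possible and recursing. -/

open Finset

namespace Stmt6

/-- The Borda score of party `c` under the linear order `O`:
`Borda(O,c) = m − pos(O,c)`, where `pos(O,c) = (O c).val + 1`. -/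
def borda {C : Type*} [Fintype C] (O : C ≃ Fin (Fintype.card C)) (c : C) : ℕ :=
  Fintype.card C - 1 - (O c).val

/-- The total Borda score of a set `S` of parties. -/
def bordaSum {C : Type*} [Fintype C] (O : C ≃ Fin (Fintype.card C)) (S : Finset C) : ℕ :=
  ∑ c ∈ S, borda O c

lemma choose_two_mul_two_add_self (n : ℕ) : n.choose 2 * 2 + n = n * n := by
  induction n with
  | zero => rfl
  | succ n ih => rw [Nat.choose_succ_succ, Nat.choose_one_right]; linarith

lemma succ_choose_two (n : ℕ) : (n + 1).choose 2 = n.choose 2 + n := by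
  rw [Nat.choose_succ_succ, Nat.choose_one_right, add_comm]

lemma natCast_choose_two (n : ℕ) : ((n.choose 2 : ℕ) : ℤ) = n * (n - 1) / 2 := by
  have := choose_two_mul_two_add_self n
  rw [mul_sub_one]
  omega

lemma natCast_choose_two_add_self (n : ℕ) : ((n.choose 2 + n : ℕ) : ℤ) = n * (n + 1) / 2 := by
  have := choose_two_mul_two_add_self n
  rw [mul_add_one]
  omega

lemma mul_add_choose_two_add_choose_two_add_le {n L K : ℕ} (h : n + L ≤ K) :
    n * L + n.choose 2 + (n.choose 2 + n) ≤ n * K := by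
  have hmul := Nat.mul_le_mul_left n h
  rw [mul_add] at hmul
  have := choose_two_mul_two_add_self n
  omega

lemma mul_add_choose_two_le_sum {t : Finset ℕ} {L : ℕ} (h : ∀ x ∈ t, L ≤ x) :
    #t * L + (#t).choose 2 ≤ ∑ x ∈ t, x := by
  induction t using Finset.induction_on_max with
  | empty => simp
  | insert a s hlt ih =>
    have ha : a ∉ s := fun ha ↦ (hlt a ha).false
    have hs : s ⊆ Ico L a := fun x hx ↦ mem_Ico.2 ⟨h x (mem_insert_of_mem hx), hlt x hx⟩
    have hcard : #s ≤ a - L := (card_le_card hs).trans (Nat.card_Ico L a).le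
    have hLa : L ≤ a := h a (mem_insert_self a s)
    have := ih fun x hx ↦ h x (mem_insert_of_mem hx)
    rw [card_insert_of_notMem ha, sum_insert ha, succ_choose_two, add_one_mul]
    omega

lemma sum_add_choose_two_add_card_le {t : Finset ℕ} {K : ℕ} (h : ∀ x ∈ t, x < K) :
    ∑ x ∈ t, x + (#t).choose 2 + #t ≤ #t * K := by
  induction t using Finset.induction_on_max generalizing K with
  | empty => simp
  | insert a s hlt ih =>
    have ha : a ∉ s := fun ha ↦ (hlt a ha).false
    have hK : a + 1 ≤ K := h a (mem_insert_self a s)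
    have := ih hlt
    have hmul := Nat.mul_le_mul_left #s hK
    rw [mul_add_one] at hmul
    rw [card_insert_of_notMem ha, sum_insert ha, succ_choose_two, add_one_mul]
    omega

lemma exists_subset_Ico_card_sum_eq {n L K s : ℕ} (hn : n + L ≤ K)
    (hlo : n * L + n.choose 2 ≤ s) (hhi : s + n.choose 2 + n ≤ n * K) :
    ∃ t ⊆ Ico L K, #t = n ∧ ∑ x ∈ t, x = s := by
  induction n generalizing K s with
  | zero => exact ⟨∅, empty_subset _, rfl, by rw [sum_empty]; omega⟩
  | succ n ih =>
    rw [succ_choose_two, add_one_mul] at hlo hhi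
    -- the largest element, capped so that the other `n` can still reach their least sum
    obtain ⟨M, hM⟩ : ∃ M, M = min (K - 1) (s - (n * L + n.choose 2)) := ⟨_, rfl⟩
    have hMK : n + L ≤ M := by omega
    have hupper : s - M + n.choose 2 + n ≤ n * M := by
      rcases le_total (K - 1) (s - (n * L + n.choose 2)) with hle | hle
      · obtain rfl : M = K - 1 := by omega
        have : n * (K - 1) + n = n * K := by rw [← mul_add_one]; congr 1; omega
        omega
      · obtain rfl : M = s - (n * L + n.choose 2) := by omega
        have hmul := Nat.mul_le_mul_left n hMK
        rw [mul_add] at hmul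
        have := choose_two_mul_two_add_self n
        omega
    obtain ⟨t, ht, hcard, hsum⟩ := ih hMK (s := s - M) (by omega) hupper
    have hMt : M ∉ t := fun hMt ↦ (mem_Ico.1 (ht hMt)).2.false
    refine ⟨insert M t, insert_subset (mem_Ico.2 ⟨by omega, by omega⟩)
      (ht.trans (Ico_subset_Ico_right (by omega))), ?_, ?_⟩
    · rw [card_insert_of_notMem hMt, hcard]
    · rw [sum_insert hMt, hsum]; omega

lemma exists_subset_union_card_sum_iff {α M : Type*} [DecidableEq α] [AddCommMonoid M]
    {X Y : Finset α} (hXY : Disjoint X Y) (f : α → M) (n : ℕ) (s : M) :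
    (∃ W ⊆ X ∪ Y, #W = n ∧ ∑ x ∈ W, f x = s) ↔
      ∃ U ⊆ X, ∃ V ⊆ Y, #U + #V = n ∧ ∑ x ∈ U, f x + ∑ x ∈ V, f x = s := by
  constructor
  · rintro ⟨W, hW, rfl, rfl⟩
    have hdisj : Disjoint (W ∩ X) (W ∩ Y) := hXY.mono inter_subset_right inter_subset_right
    have hsplit : W ∩ X ∪ W ∩ Y = W := by rw [← inter_union_distrib_left, inter_eq_left.2 hW]
    refine ⟨W ∩ X, inter_subset_right, W ∩ Y, inter_subset_right, ?_, ?_⟩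
    · rw [← card_union_of_disjoint hdisj, hsplit]
    · rw [← sum_union hdisj, hsplit]
  · rintro ⟨U, hU, V, hV, rfl, rfl⟩
    have hdisj : Disjoint U V := hXY.mono hU hV
    exact ⟨U ∪ V, union_subset_union hU hV, card_union_of_disjoint hdisj, sum_union hdisj⟩

lemma range_erase_eq_Ico_union {k m : ℕ} (hk : k < m) :
    (range m).erase k = Ico 0 k ∪ Ico (k + 1) m := by
  ext x; simp only [mem_erase, mem_range, mem_union, mem_Ico]; omega

lemma exists_equiv_fin_apply_eq_image_eq {α : Type*} [Fintype α] {a : α}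
    {S : Finset α} (ha : a ∉ S) {k : ℕ} (hk : k < Fintype.card α) {W : Finset ℕ}
    (hW : W ⊆ (range (Fintype.card α)).erase k) (hcard : #W = #S) :
    ∃ e : α ≃ Fin (Fintype.card α), (e a : ℕ) = k ∧ S.image (fun c ↦ (e c : ℕ)) = W := by
  classical
  obtain ⟨σ⟩ : Nonempty (S ≃ W) := by
    rw [← Fintype.card_eq, Fintype.card_coe, Fintype.card_coe, hcard]
  let f : α → ℕ := fun c ↦ if h : c ∈ S then σ ⟨c, h⟩ else k
  have hfa : f a = k := dif_neg ha
  have hfS : ∀ c (h : c ∈ S), f c = σ ⟨c, h⟩ := fun c h ↦ dif_pos h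
  have hfW : ∀ c ∈ S, f c ∈ W := fun c h ↦ hfS c h ▸ (σ ⟨c, h⟩).2
  have hfk : ∀ c ∈ S, f c ≠ k := fun c h ↦ (mem_erase.1 (hW (hfW c h))).1
  have hinj : Set.InjOn f ↑(insert a S) := by
    intro x hx y hy hxy
    rw [mem_coe] at hx hy
    rcases mem_insert.1 hx with rfl | hxS <;> rcases mem_insert.1 hy with rfl | hyS
    · rfl
    · exact absurd (hxy.symm.trans hfa) (hfk y hyS)
    · exact absurd (hxy.trans hfa) (hfk x hxS)
    · rw [hfS x hxS, hfS y hyS] at hxy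
      exact congrArg Subtype.val (σ.injective (Subtype.ext hxy))
  have hmaps : (insert a S).image f ⊆ range (Fintype.card α) := by
    intro x hx
    obtain ⟨c, hc, rfl⟩ := mem_image.1 hx
    rcases mem_insert.1 hc with rfl | hcS
    · exact mem_range.2 (hfa ▸ hk)
    · exact mem_of_mem_erase (hW (hfW c hcS))
  obtain ⟨g, hg⟩ := exists_equiv_extend_of_card_eq (card_range _).symm hmaps hinj
  let e : α ≃ Fin (Fintype.card α) :=
    (g.trans (Equiv.subtypeEquivRight fun _ ↦ mem_range)).trans Fin.equivSubtype.symm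
  have he : ∀ c ∈ insert a S, (e c : ℕ) = f c := hg
  refine ⟨e, (he a (mem_insert_self a S)).trans hfa, ?_⟩
  rw [image_congr fun c hc ↦ he c (mem_insert_of_mem hc)]
  refine eq_of_subset_of_card_le (image_subset_iff.2 hfW) ?_
  rw [card_image_of_injOn (hinj.mono (coe_subset.2 (subset_insert a S))), hcard]

section Borda

variable {C : Type*} [Fintype C]

lemma borda_eq_val_rev (O : C ≃ Fin (Fintype.card C)) (c : C) : borda O c = (O c).rev := by
  rw [borda, Fin.val_rev]; omega

lemma borda_injective (O : C ≃ Fin (Fintype.card C)) : Function.Injective (borda O) := by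
  intro x y h
  simp only [borda_eq_val_rev] at h
  exact O.injective (Fin.rev_injective (Fin.val_injective h))

lemma borda_lt_card (O : C ≃ Fin (Fintype.card C)) (c : C) : borda O c < Fintype.card C :=
  borda_eq_val_rev O c ▸ (O c).rev.isLt

lemma borda_trans_revPerm (e : C ≃ Fin (Fintype.card C)) (c : C) :
    borda (e.trans Fin.revPerm) c = e c := by
  simp [borda_eq_val_rev]

theorem exists_borda_eq_iff {c₁ : C} {S : Finset C} (hc₁ : c₁ ∉ S) (k s : ℕ) :
    (∃ O : C ≃ Fin (Fintype.card C), borda O c₁ = k ∧ bordaSum O S = s) ↔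
      k < Fintype.card C ∧
        ∃ W ⊆ (range (Fintype.card C)).erase k, #W = #S ∧ ∑ x ∈ W, x = s := by
  classical
  constructor
  · rintro ⟨O, rfl, rfl⟩
    refine ⟨borda_lt_card O c₁, S.image (borda O), fun x hx ↦ ?_,
      card_image_of_injective _ (borda_injective O), sum_image fun _ _ _ _ h ↦ borda_injective O h⟩
    obtain ⟨c, hc, rfl⟩ := mem_image.1 hx
    exact mem_erase.2 ⟨(borda_injective O).ne (by rintro rfl; exact hc₁ hc),
      mem_range.2 (borda_lt_card O c)⟩
  · rintro ⟨hk, W, hW, hcard, rfl⟩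
    obtain ⟨e, he₁, heS⟩ := exists_equiv_fin_apply_eq_image_eq hc₁ hk hW hcard
    refine ⟨e.trans Fin.revPerm, by rw [borda_trans_revPerm, he₁], ?_⟩
    rw [← heS, sum_image fun _ _ _ _ h ↦ e.injective (Fin.val_injective h), bordaSum]
    exact sum_congr rfl fun c _ ↦ borda_trans_revPerm e c

theorem exists_borda_eq_iff_exists_split {c₁ : C} {S : Finset C} (hc₁ : c₁ ∉ S) (k s : ℕ) :
    (∃ O : C ≃ Fin (Fintype.card C), borda O c₁ = k ∧ bordaSum O S = s) ↔
      k < Fintype.card C ∧ ∃ ld lu : ℕ, ld + lu = #S ∧ ld ≤ k ∧ lu + (k + 1) ≤ Fintype.card C ∧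
        ld.choose 2 + (lu * (k + 1) + lu.choose 2) ≤ s ∧
        s + (ld.choose 2 + ld) + (lu.choose 2 + lu) ≤ ld * k + lu * Fintype.card C := by
  rw [exists_borda_eq_iff hc₁]
  refine and_congr_right fun hk ↦ ?_
  have hdisj : Disjoint (Ico 0 k) (Ico (k + 1) (Fintype.card C)) :=
    disjoint_left.2 fun x hx hx' ↦ by rw [mem_Ico] at hx hx'; omega
  rw [range_erase_eq_Ico_union hk, exists_subset_union_card_sum_iff hdisj]
  constructor
  · rintro ⟨U, hU, V, hV, hcard, hsum⟩
    have hloU := mul_add_choose_two_le_sum fun x hx ↦ (mem_Ico.1 (hU hx)).1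
    have hloV := mul_add_choose_two_le_sum fun x hx ↦ (mem_Ico.1 (hV hx)).1
    have hhiU := sum_add_choose_two_add_card_le fun x hx ↦ (mem_Ico.1 (hU hx)).2
    have hhiV := sum_add_choose_two_add_card_le fun x hx ↦ (mem_Ico.1 (hV hx)).2
    have hU' := (card_le_card hU).trans_eq (Nat.card_Ico 0 k)
    have hV' := (card_le_card hV).trans_eq (Nat.card_Ico (k + 1) _)
    exact ⟨#U, #V, hcard, by omega, by omega, by omega, by omega⟩
  · rintro ⟨ld, lu, hcard, hld, hlu, hlo, hhi⟩
    -- the least sum the scores above `k` may have leaves an attainable sum `s - sU` below `k`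
    obtain ⟨sU, hsU⟩ :
        ∃ sU, sU = max (lu * (k + 1) + lu.choose 2) (s + (ld.choose 2 + ld) - ld * k) :=
      ⟨_, rfl⟩
    have hUrange := mul_add_choose_two_add_choose_two_add_le (L := 0) hld
    have hVrange := mul_add_choose_two_add_choose_two_add_le hlu
    obtain ⟨U, hU, hUcard, hUsum⟩ :=
      exists_subset_Ico_card_sum_eq (n := ld) (L := 0) (K := k) (s := s - sU) (by omega)
        (by omega) (by omega)
    obtain ⟨V, hV, hVcard, hVsum⟩ :=
      exists_subset_Ico_card_sum_eq (n := lu) (L := k + 1) (s := sU) hlu (by omega) (by omega)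
    exact ⟨U, hU, V, hV, by omega, by omega⟩

end Borda

theorem stmt_6_general {C : Type*} [Fintype C] (c1 : C) (Am1 : Finset C)
    (hc1 : c1 ∉ Am1) (a : ℕ) (hA : Am1.card = a)
    (k1 : ℕ) (kA : ℤ) (hk1 : k1 ≤ Fintype.card C - 1) :
    (∃ O : C ≃ Fin (Fintype.card C),
        borda O c1 = k1 ∧ (bordaSum O Am1 : ℤ) = kA) ↔
      (∃ ld lu : ℕ, ld + lu = a ∧ ld ≤ k1 ∧ lu ≤ Fintype.card C - 1 - k1 ∧
        ((ld : ℤ) * ((ld : ℤ) - 1)) / 2 + (lu : ℤ) * (k1 : ℤ) +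
            ((lu : ℤ) * ((lu : ℤ) + 1)) / 2 ≤ kA ∧
        kA ≤ (ld : ℤ) * (k1 : ℤ) - ((ld : ℤ) * ((ld : ℤ) + 1)) / 2 +
            (lu : ℤ) * (Fintype.card C : ℤ) - ((lu : ℤ) * ((lu : ℤ) + 1)) / 2) := by
  classical
  have hk : k1 < Fintype.card C := by
    have := Fintype.card_pos_iff.2 ⟨c1⟩
    omega
  simp only [← natCast_choose_two, ← natCast_choose_two_add_self]
  rcases lt_or_ge kA 0 with hkA | hkA
  · refine iff_of_false (fun ⟨O, _, hO⟩ ↦ by omega) fun ⟨ld, lu, _, _, _, hlo, _⟩ ↦ ?_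
    have : 0 ≤ (lu : ℤ) * k1 := by positivity
    omega
  lift kA to ℕ using hkA
  simp only [Nat.cast_inj]
  rw [exists_borda_eq_iff_exists_split hc1, hA]
  simp only [hk, true_and, mul_add_one]
  refine exists₂_congr fun ld lu ↦ ?_
  omega

/-- attainability of a pair of Borda scores `(k₁, k_A)` for `c₁` and for a
set `A₋₁` of `a` parties not containing `c₁`, characterized by the split
`ℓ↓ + ℓ↑ = a` of `A₋₁` into the parts below and above `c₁`. -/
theorem stmt_6 {C : Type*} [Fintype C] [DecidableEq C] (c1 : C) (Am1 : Finset C)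
    (hc1 : c1 ∉ Am1) (a : ℕ) (hA : Am1.card = a)
    (k1 : ℕ) (kA : ℤ) (hk1 : k1 ≤ Fintype.card C - 1) :
    (∃ O : C ≃ Fin (Fintype.card C),
        borda O c1 = k1 ∧ (bordaSum O Am1 : ℤ) = kA) ↔
      (∃ ld lu : ℕ, ld + lu = a ∧ ld ≤ k1 ∧ lu ≤ Fintype.card C - 1 - k1 ∧
        ((ld : ℤ) * ((ld : ℤ) - 1)) / 2 + (lu : ℤ) * (k1 : ℤ) +
            ((lu : ℤ) * ((lu : ℤ) + 1)) / 2 ≤ kA ∧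
        kA ≤ (ld : ℤ) * (k1 : ℤ) - ((ld : ℤ) * ((ld : ℤ) + 1)) / 2 +
            (lu : ℤ) * (Fintype.card C : ℤ) - ((lu : ℤ) * ((lu : ℤ) + 1)) / 2) :=
  stmt_6_general c1 Am1 hc1 a hA k1 kA hk1

end Stmt6
end

section
/- Let O and Ô be linear orders on a finite set C of m parties and let S ⊆ C. Suppose that every inverted pair (x,y) of (O,Ô) satisfies y ∈ S and x ∉ S. Then Borda(Ô,S) − Borda(O,S) equals the number of inverted pairs of (O,Ô). -/
open Finset

namespace Stmt7

/-- The Borda score of party `c` under the linear order `O`: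
`Borda(O,c) = m − pos(O,c)`, where `pos(O,c) = (O c).val + 1`. -/
def borda {C : Type*} [Fintype C] (O : C ≃ Fin (Fintype.card C)) (c : C) : ℕ :=
  Fintype.card C - 1 - (O c).val

/-- The total Borda score of a set `S` of parties. -/
def bordaSum {C : Type*} [Fintype C] (O : C ≃ Fin (Fintype.card C)) (S : Finset C) : ℕ :=
  ∑ c ∈ S, borda O c

/-- The inverted pairs of `(O, Ob)`: pairs `(x, y)` with `y` below `x` in `O`
and `y` above `x` in `Ob`. -/
def invPairs {C : Type*} [Fintype C] [DecidableEq C]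
    (O Ob : C ≃ Fin (Fintype.card C)) : Finset (C × C) :=
  (Finset.univ : Finset (C × C)).filter fun q => O q.1 < O q.2 ∧ Ob q.2 < Ob q.1

lemma sum_val_eq {C : Type*} [Fintype C] [DecidableEq C]
    (O : C ≃ Fin (Fintype.card C)) (S : Finset C) :
    ∑ c ∈ S, (O c).val =
      ((Finset.univ : Finset (C × C)).filter fun q => q.2 ∈ S ∧ O q.1 < O q.2).card := by
  rw [Finset.card_filter, Fintype.sum_prod_type, Finset.sum_comm]
  have key : ∀ c : C, (∑ d : C, if c ∈ S ∧ O d < O c then 1 else 0) =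
      if c ∈ S then (O c).val else 0 := by
    intro c
    by_cases hc : c ∈ S
    · simp only [hc, true_and, if_true]
      rw [← Finset.card_filter]
      have e1 : (Finset.univ.filter fun d => O d < O c).card =
          (Finset.univ.filter fun i : Fin (Fintype.card C) => i < O c).card := by
        apply Finset.card_bij (fun d _ => O d)
        · intro a ha; simp only [mem_filter, mem_univ, true_and] at ha ⊢; exact ha
        · intro a _ b _ hab; exact O.injective hab
        · intro i hi
          refine ⟨O.symm i, ?_, by simp⟩
          simp only [mem_filter, mem_univ, true_and] at hi ⊢
          simpa using hi
      rw [e1]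
      have : (Finset.univ.filter fun i : Fin (Fintype.card C) => i < O c) =
          Finset.Iio (O c) := by ext i; simp
      rw [this]; simp
    · simp [hc]
  rw [Finset.sum_congr rfl fun c _ => key c, Finset.sum_ite_mem,
    Finset.univ_inter]

/-- if every inverted pair `(x,y)` of `(O,Ob)` has `y ∈ S` and `x ∉ S`,
then `Borda(Ob,S) − Borda(O,S)` equals the number of inverted pairs. -/
theorem stmt_7 {C : Type*} [Fintype C] [DecidableEq C]
    (O Ob : C ≃ Fin (Fintype.card C)) (S : Finset C)
    (h : ∀ x y : C, O x < O y → Ob y < Ob x → y ∈ S ∧ x ∉ S) :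
    (bordaSum Ob S : ℤ) - (bordaSum O S : ℤ) = ((invPairs O Ob).card : ℤ) := by
  set A : Finset (C × C) :=
    (Finset.univ : Finset (C × C)).filter
      fun q => q.2 ∈ S ∧ O q.1 < O q.2 ∧ Ob q.1 < Ob q.2 with hA
  have hTOb : ((Finset.univ : Finset (C × C)).filter fun q => q.2 ∈ S ∧ Ob q.1 < Ob q.2) = A := by
    ext q
    simp only [hA, mem_filter, mem_univ, true_and]
    constructor
    · rintro ⟨hS, hlt⟩
      refine ⟨hS, ?_, hlt⟩
      rcases lt_trichotomy (O q.1) (O q.2) with h1 | h1 | h1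
      · exact h1
      · rw [O.injective h1] at hlt; exact absurd hlt (lt_irrefl _)
      · exact absurd hS (h q.2 q.1 h1 hlt).2
    · rintro ⟨hS, _, hlt⟩; exact ⟨hS, hlt⟩
  have hInv : invPairs O Ob =
      (Finset.univ : Finset (C × C)).filter
        fun q => q.2 ∈ S ∧ O q.1 < O q.2 ∧ Ob q.2 < Ob q.1 := by
    ext q
    simp only [invPairs, mem_filter, mem_univ, true_and]
    constructor
    · rintro ⟨h1, h2⟩; exact ⟨(h q.1 q.2 h1 h2).1, h1, h2⟩
    · rintro ⟨_, h1, h2⟩; exact ⟨h1, h2⟩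
  have hTO : ((Finset.univ : Finset (C × C)).filter fun q => q.2 ∈ S ∧ O q.1 < O q.2) =
      invPairs O Ob ∪ A := by
    rw [hInv, hA, ← Finset.filter_or]
    apply Finset.filter_congr
    intro q _
    constructor
    · rintro ⟨hS, hlt⟩
      rcases lt_trichotomy (Ob q.1) (Ob q.2) with h1 | h1 | h1
      · exact Or.inr ⟨hS, hlt, h1⟩
      · rw [Ob.injective h1] at hlt; exact absurd hlt (lt_irrefl _)
      · exact Or.inl ⟨hS, hlt, h1⟩
    · rintro (⟨hS, hlt, _⟩ | ⟨hS, hlt, _⟩) <;> exact ⟨hS, hlt⟩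
  have hdisj : Disjoint (invPairs O Ob) A := by
    rw [hInv, hA, Finset.disjoint_filter]
    rintro q _ ⟨_, _, h2⟩ ⟨_, _, h3⟩
    exact absurd (h2.trans h3) (lt_irrefl _)
  have hcard : ∑ c ∈ S, (O c).val = (invPairs O Ob).card + ∑ c ∈ S, (Ob c).val := by
    rw [sum_val_eq O S, sum_val_eq Ob S, hTO, hTOb,
      Finset.card_union_of_disjoint hdisj]
  rcases Nat.eq_zero_or_pos (Fintype.card C) with h0 | h0
  · have hS : S = ∅ := by
      rw [Finset.eq_empty_iff_forall_notMem]
      intro c _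
      have : Fin 0 := h0 ▸ O c
      exact this.elim0
    have hI : invPairs O Ob = ∅ := by
      rw [Finset.eq_empty_iff_forall_notMem]
      intro q _
      have : Fin 0 := h0 ▸ O q.1
      exact this.elim0
    simp [bordaSum, hS, hI]
  · have hb : ∀ (P : C ≃ Fin (Fintype.card C)) (c : C),
        (borda P c : ℤ) = ((Fintype.card C : ℤ) - 1) - (P c).val := by
      intro P c
      have hle : (P c).val ≤ Fintype.card C - 1 := Nat.le_sub_one_of_lt (P c).isLt
      simp only [borda]
      omega
    have hbs : ∀ P : C ≃ Fin (Fintype.card C), (bordaSum P S : ℤ) =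
        S.card * ((Fintype.card C : ℤ) - 1) - ∑ c ∈ S, ((P c).val : ℤ) := by
      intro P
      simp only [bordaSum, Nat.cast_sum]
      rw [Finset.sum_congr rfl fun c _ => hb P c, Finset.sum_sub_distrib,
        Finset.sum_const, nsmul_eq_mul]
    rw [hbs O, hbs Ob]
    have := congrArg (fun n : ℕ => (n : ℤ)) hcard
    push_cast at this ⊢
    linarith


end Stmt7
end

section
/- Let V be a finite set of n voters, where each voter i votes for a single party top(i) belonging to a finite set of parties C and has a price p_i ≥ 0, and let T ∈ ℕ be a threshold. For a set of parties D ⊆ C let V_D = {i ∈ V : top(i) ∈ D}, and for W ⊆ V_D and a party c_j ∈ D let r_j(W) = |{i ∈ V : top(i) = c_j and i ∉ W}|; define the active count a_D(W) = Σ over those c_j ∈ D with r_j(W) ≥ T of r_j(W). Define F(D,ℓ,a) ∈ ℝ≥0 ∪ {∞} as the infimum of Σ_{i∈W} p_i over all W ⊆ V_D with |W| = ℓ and a_D(W) = a (with F(D,ℓ,a) = ∞ if no such W exists). Then for every D ⊆ C and every party c_j ∈ C∖D: F(D∪{c_j}, ℓ, a) = min over integers 0 ≤ ℓ' ≤ ℓ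 and 0 ≤ a' ≤ a of F(D,ℓ',a') + F({c_j}, ℓ−ℓ', a−a'), with the conventions ∞ + x = ∞ and that the minimum over an empty set is ∞. -/
open Finset

namespace Stmt10

/-- The number of remaining votes of party `c`: voters voting for `c` that are not
in the bribed set `W`. -/
def remVotes {V C : Type*} [Fintype V] [DecidableEq V] [DecidableEq C]
    (top : V → C) (W : Finset V) (c : C) : ℕ :=
  (Finset.univ.filter fun i : V => top i = c ∧ i ∉ W).card

/-- The active count `a_D(W)`: the total remaining votes of the parties of `D` whose
remaining vote count meets the threshold `T`. -/
def activeCount {V C : Type*} [Fintype V] [DecidableEq V] [DecidableEq C]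
    (top : V → C) (T : ℕ) (D : Finset C) (W : Finset V) : ℕ :=
  ∑ c ∈ D.filter (fun c => T ≤ remVotes top W c), remVotes top W c

/-- `F(D,ℓ,a)`: the least price of an undetermined bribe `W ⊆ V_D` with `|W| = ℓ`
and active count `a` (as an extended real; `⊤` if no such `W` exists). -/
noncomputable def F {V C : Type*} [Fintype V] [DecidableEq V] [DecidableEq C]
    (top : V → C) (p : V → ℝ) (T : ℕ) (D : Finset C) (ℓ a : ℕ) : EReal :=
  sInf { x : EReal | ∃ W : Finset V, (∀ i ∈ W, top i ∈ D) ∧ W.card = ℓ ∧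
    activeCount top T D W = a ∧ x = ((∑ i ∈ W, p i : ℝ) : EReal) }

section Helpers

variable {V C : Type*} [Fintype V] [DecidableEq V] [DecidableEq C]

lemma remVotes_congr (top : V → C) {W W' : Finset V} {c : C}
    (h : ∀ i, top i = c → (i ∈ W ↔ i ∈ W')) :
    remVotes top W c = remVotes top W' c := by
  unfold remVotes
  congr 1
  apply Finset.filter_congr
  intro i _
  constructor <;> rintro ⟨h1, h2⟩ <;> exact ⟨h1, fun hm => h2 (by rw [h i h1] at *; exact hm)⟩

lemma activeCount_eq_sum (top : V → C) (T : ℕ) (D : Finset C) (W : Finset V) :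
    activeCount top T D W
      = ∑ c ∈ D, if T ≤ remVotes top W c then remVotes top W c else 0 := by
  rw [activeCount, Finset.sum_filter]

lemma activeCount_insert (top : V → C) (T : ℕ) {D : Finset C} {c : C}
    (hc : c ∉ D) (W : Finset V) :
    activeCount top T (insert c D) W
      = activeCount top T {c} W + activeCount top T D W := by
  simp [activeCount_eq_sum, Finset.sum_insert hc]

lemma activeCount_congr (top : V → C) (T : ℕ) {D : Finset C} {W W' : Finset V}
    (h : ∀ c ∈ D, remVotes top W c = remVotes top W' c) :
    activeCount top T D W = activeCount top T D W' := by
  rw [activeCount_eq_sum, activeCount_eq_sum]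
  exact Finset.sum_congr rfl fun c hcD => by rw [h c hcD]

lemma F_finite_set (top : V → C) (p : V → ℝ) (T : ℕ) (D : Finset C) (ℓ a : ℕ) :
    { x : EReal | ∃ W : Finset V, (∀ i ∈ W, top i ∈ D) ∧ W.card = ℓ ∧
      activeCount top T D W = a ∧ x = ((∑ i ∈ W, p i : ℝ) : EReal) }.Finite := by
  apply Set.Finite.subset (Set.finite_range fun W : Finset V => ((∑ i ∈ W, p i : ℝ) : EReal))
  rintro x ⟨W, _, _, _, rfl⟩
  exact ⟨W, rfl⟩

lemma F_ne_bot (top : V → C) (p : V → ℝ) (T : ℕ) (D : Finset C) (ℓ a : ℕ) :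
    F top p T D ℓ a ≠ ⊥ := by
  rcases Set.eq_empty_or_nonempty
    { x : EReal | ∃ W : Finset V, (∀ i ∈ W, top i ∈ D) ∧ W.card = ℓ ∧
      activeCount top T D W = a ∧ x = ((∑ i ∈ W, p i : ℝ) : EReal) } with h | h
  · rw [F, h, sInf_empty]; simp
  · have := h.csInf_mem (F_finite_set top p T D ℓ a)
    rw [F]
    obtain ⟨W, _, _, _, hW⟩ := this
    rw [hW]
    exact EReal.coe_ne_bot _

lemma F_attained {top : V → C} {p : V → ℝ} {T : ℕ} {D : Finset C} {ℓ a : ℕ}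
    (h : F top p T D ℓ a ≠ ⊤) :
    ∃ W : Finset V, (∀ i ∈ W, top i ∈ D) ∧ W.card = ℓ ∧
      activeCount top T D W = a ∧ F top p T D ℓ a = ((∑ i ∈ W, p i : ℝ) : EReal) := by
  rcases Set.eq_empty_or_nonempty
    { x : EReal | ∃ W : Finset V, (∀ i ∈ W, top i ∈ D) ∧ W.card = ℓ ∧
      activeCount top T D W = a ∧ x = ((∑ i ∈ W, p i : ℝ) : EReal) } with he | he
  · exact absurd (by rw [F, he, sInf_empty]) h
  · have := he.csInf_mem (F_finite_set top p T D ℓ a)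
    obtain ⟨W, h1, h2, h3, hW⟩ := this
    exact ⟨W, h1, h2, h3, hW⟩

end Helpers

/-- the separability identity of the dynamic program:
`F(D∪{c}, ℓ, a) = min_{ℓ' ≤ ℓ, a' ≤ a} F(D,ℓ',a') + F({c}, ℓ−ℓ', a−a')`. -/
theorem stmt_10 {V C : Type*} [Fintype V] [DecidableEq V] [DecidableEq C]
    (top : V → C) (p : V → ℝ) (hp : ∀ i, 0 ≤ p i) (T : ℕ)
    (D : Finset C) (c : C) (hc : c ∉ D) (ℓ a : ℕ) :
    F top p T (insert c D) ℓ a =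
      ⨅ ℓ' ∈ Finset.range (ℓ + 1), ⨅ a' ∈ Finset.range (a + 1),
        F top p T D ℓ' a' + F top p T {c} (ℓ - ℓ') (a - a') := by
  apply le_antisymm
  · apply le_iInf₂
    intro ℓ' hℓ'
    apply le_iInf₂
    intro a' ha'
    rw [Finset.mem_range, Nat.lt_succ_iff] at hℓ' ha'
    rcases eq_or_ne (F top p T D ℓ' a') ⊤ with h1 | h1
    · rw [h1, EReal.top_add_of_ne_bot (F_ne_bot top p T {c} (ℓ - ℓ') (a - a'))]
      exact le_top
    rcases eq_or_ne (F top p T {c} (ℓ - ℓ') (a - a')) ⊤ with h2 | h2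
    · rw [h2, EReal.add_top_of_ne_bot (F_ne_bot top p T D ℓ' a')]
      exact le_top
    obtain ⟨W1, hW1D, hW1card, hW1act, hW1val⟩ := F_attained h1
    obtain ⟨W2, hW2D, hW2card, hW2act, hW2val⟩ := F_attained h2
    have htop2 : ∀ i ∈ W2, top i = c := by
      intro i hi
      have := hW2D i hi
      simpa using this
    have hdisj : Disjoint W1 W2 := by
      rw [Finset.disjoint_left]
      intro i hi1 hi2
      exact hc (htop2 i hi2 ▸ hW1D i hi1)
    have hrem1 : ∀ c' ∈ D, remVotes top (W1 ∪ W2) c' = remVotes top W1 c' := by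
      intro c' hc'
      apply remVotes_congr
      intro i hi
      simp only [Finset.mem_union]
      constructor
      · rintro (h | h)
        · exact h
        · exact absurd ((htop2 i h ▸ hi : (c:C) = c') ▸ hc') hc
      · exact Or.inl
    have hrem2 : remVotes top (W1 ∪ W2) c = remVotes top W2 c := by
      apply remVotes_congr
      intro i hi
      simp only [Finset.mem_union]
      constructor
      · rintro (h | h)
        · exact absurd (hi ▸ hW1D i h) hc
        · exact h
      · exact Or.inr
    rw [hW1val, hW2val, ← EReal.coe_add]
    apply sInf_le
    refine ⟨W1 ∪ W2, ?_, ?_, ?_, ?_⟩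
    · intro i hi
      rcases Finset.mem_union.mp hi with h | h
      · exact Finset.mem_insert_of_mem (hW1D i h)
      · exact Finset.mem_insert.mpr (Or.inl (htop2 i h))
    · rw [Finset.card_union_of_disjoint hdisj, hW1card, hW2card,
        Nat.add_sub_cancel' hℓ']
    · rw [activeCount_insert top T hc,
        activeCount_congr top T hrem1, hW1act]
      have : activeCount top T {c} (W1 ∪ W2) = activeCount top T {c} W2 := by
        apply activeCount_congr
        intro c' hc'
        rw [Finset.mem_singleton] at hc'
        subst hc'
        exact hrem2
      rw [this, hW2act, Nat.sub_add_cancel ha']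
    · rw [Finset.sum_union hdisj]
  · apply le_sInf
    rintro x ⟨W, hWD, hWcard, hWact, rfl⟩
    set W1 := W.filter (fun i => ¬ top i = c) with hW1def
    set W2 := W.filter (fun i => top i = c) with hW2def
    have hW1D : ∀ i ∈ W1, top i ∈ D := by
      intro i hi
      rw [hW1def, Finset.mem_filter] at hi
      rcases Finset.mem_insert.mp (hWD i hi.1) with h | h
      · exact absurd h hi.2
      · exact h
    have hW2c : ∀ i ∈ W2, top i ∈ ({c} : Finset C) := by
      intro i hi
      rw [hW2def, Finset.mem_filter] at hi
      simp [hi.2]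
    have hcards : W2.card + W1.card = ℓ := by
      rw [hW1def, hW2def, Finset.card_filter_add_card_filter_not, hWcard]
    have hℓ' : W1.card ≤ ℓ := hcards ▸ Nat.le_add_left _ _
    have hℓsub : ℓ - W1.card = W2.card := by omega
    have hrem1 : ∀ c' ∈ D, remVotes top W c' = remVotes top W1 c' := by
      intro c' hc'
      apply remVotes_congr
      intro i hi
      rw [hW1def, Finset.mem_filter]
      constructor
      · intro h
        exact ⟨h, fun heq => hc (heq ▸ hi ▸ hc')⟩
      · exact fun h => h.1
    have hrem2 : remVotes top W c = remVotes top W2 c := by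
      apply remVotes_congr
      intro i hi
      rw [hW2def, Finset.mem_filter]
      constructor
      · exact fun h => ⟨h, hi⟩
      · exact fun h => h.1
    have hactsplit : activeCount top T {c} W2 + activeCount top T D W1 = a := by
      rw [← hWact, activeCount_insert top T hc]
      congr 1
      · apply activeCount_congr
        intro c' hc'
        rw [Finset.mem_singleton] at hc'
        subst hc'
        exact hrem2.symm
      · exact (activeCount_congr top T hrem1).symm
    have ha' : activeCount top T D W1 ≤ a := hactsplit ▸ Nat.le_add_left _ _
    have hasub : a - activeCount top T D W1 = activeCount top T {c} W2 := by omega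
    have hdisj : Disjoint W1 W2 := by
      rw [Finset.disjoint_left]
      intro i hi1 hi2
      rw [hW1def, Finset.mem_filter] at hi1
      rw [hW2def, Finset.mem_filter] at hi2
      exact hi1.2 hi2.2
    have hWunion : W1 ∪ W2 = W := by
      ext i
      simp only [hW1def, hW2def, Finset.mem_union, Finset.mem_filter]
      tauto
    calc (⨅ ℓ' ∈ Finset.range (ℓ + 1), ⨅ a' ∈ Finset.range (a + 1),
            F top p T D ℓ' a' + F top p T {c} (ℓ - ℓ') (a - a'))
        ≤ ⨅ a' ∈ Finset.range (a + 1),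
            F top p T D W1.card a' + F top p T {c} (ℓ - W1.card) (a - a') := by
          exact iInf₂_le W1.card (Finset.mem_range.mpr (Nat.lt_succ_of_le hℓ'))
      _ ≤ F top p T D W1.card (activeCount top T D W1)
            + F top p T {c} (ℓ - W1.card) (a - activeCount top T D W1) := by
          exact iInf₂_le _ (Finset.mem_range.mpr (Nat.lt_succ_of_le ha'))
      _ ≤ ((∑ i ∈ W1, p i : ℝ) : EReal) + ((∑ i ∈ W2, p i : ℝ) : EReal) := by
          apply add_le_add
          · exact sInf_le ⟨W1, hW1D, rfl, rfl, rfl⟩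
          · exact sInf_le ⟨W2, hW2c, hℓsub.symm ▸ rfl, hasub.symm ▸ rfl, rfl⟩
      _ = ((∑ i ∈ W, p i : ℝ) : EReal) := by
          rw [← EReal.coe_add, ← Finset.sum_union hdisj, hWunion]

end Stmt10
end

section
/- Let V be a finite set of n voters, where each voter i votes for a single party top(i) belonging to a finite set of parties C and has a price p_i ≥ 0, and let T ∈ ℕ be a threshold. For a set of parties D ⊆ C let V_D = {i ∈ V : top(i) ∈ D}, and for W ⊆ V_D and a party c_j ∈ D let r_j(W) = |{i ∈ V : top(i) = c_j and i ∉ W}|. Define H(D,ℓ,d,a) ∈ ℝ≥0 ∪ {∞} as the infimum of Σ_{i∈W} p_i over all W ⊆ V_D with |W| = ℓ for which there exist nonnegative integers (d_j) indexed by the parties c_j ∈ D with Σ_j d_j = d and Σ over those c_j ∈ D with r_j(W)+d_j ≥ T of (r_j(W)+d_j) equal to a (with H = ∞ if no such W exists). Then for every D ⊆ C and every party c_j ∈ C∖D: H(D∪{c_j}, ℓ, d, a) = min over integers 0 ≤ ℓ' ≤ ℓ, 0 ≤ d' ≤ d, 0 ≤ a' ≤ a of H(D,ℓ',d',a') + H({c_j},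 ℓ−ℓ', d−d', a−a'), with the conventions ∞ + x = ∞ and that the minimum over an empty set is ∞. -/
/-!
Splitting a bribe `W ⊆ V_{D₁ ∪ D₂}` (with `D₁`, `D₂` disjoint) into its parts `W₁ ⊆ V_{D₁}` and
`W₂ ⊆ V_{D₂}`, and the redirected votes `dd` into their restrictions to `D₁` and `D₂`, is a
bijection that adds up sizes, redirected votes, active vote totals and prices: the remaining
votes of a party of `D₁` do not depend on `W₂`, and conversely. Hence the feasible prices for
`D₁ ∪ D₂` are exactly the sums of feasible prices for `D₁` and for `D₂`, and since these price
sets are finite sets of reals, their infima (or `⊤` when empty) add up.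
-/

open Finset

namespace Stmt11

/-- The number of remaining votes of party `c`: voters voting for `c` that are not
in the bribed set `W`. -/
def remVotes {V C : Type*} [Fintype V] [DecidableEq V] [DecidableEq C]
    (top : V → C) (W : Finset V) (c : C) : ℕ :=
  (Finset.univ.filter fun i : V => top i = c ∧ i ∉ W).card

/-- `H(D,ℓ,d,a)`: the least price of an undetermined bribe `W ⊆ V_D` with `|W| = ℓ`
such that `d` additional votes can be distributed among the parties of `D` so that the
total active vote count (threshold `T`) is `a` (as an extended real; `⊤` if impossible). -/
noncomputable def H {V C : Type*} [Fintype V] [DecidableEq V] [DecidableEq C]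
    (top : V → C) (p : V → ℝ) (T : ℕ) (D : Finset C) (ℓ d a : ℕ) : EReal :=
  sInf { x : EReal | ∃ W : Finset V, (∀ i ∈ W, top i ∈ D) ∧ W.card = ℓ ∧
    (∃ dd : C → ℕ, (∑ c ∈ D, dd c) = d ∧
      (∑ c ∈ D.filter (fun c => T ≤ remVotes top W c + dd c),
        (remVotes top W c + dd c)) = a) ∧
    x = ((∑ i ∈ W, p i : ℝ) : EReal) }

lemma le_sInf_add_sInf_of_finite {A B : Set EReal} {y : EReal} (hA : A.Finite) (hB : B.Finite)
    (hA_bot : ⊥ ∉ A) (hB_bot : ⊥ ∉ B) (h : ∀ a ∈ A, ∀ b ∈ B, y ≤ a + b) :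
    y ≤ sInf A + sInf B := by
  have sInf_ne_bot {S : Set EReal} (hS : S.Finite) (hS_bot : ⊥ ∉ S) : sInf S ≠ ⊥ := by
    rcases S.eq_empty_or_nonempty with rfl | hne
    · simp
    · exact fun h => hS_bot (h ▸ hne.csInf_mem hS)
  rcases A.eq_empty_or_nonempty with rfl | hA_ne
  · simp [EReal.top_add_of_ne_bot (sInf_ne_bot hB hB_bot)]
  rcases B.eq_empty_or_nonempty with rfl | hB_ne
  · simp [EReal.add_top_of_ne_bot (sInf_ne_bot hA hA_bot)]
  exact h _ (hA_ne.csInf_mem hA) _ (hB_ne.csInf_mem hB)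

lemma disjoint_of_forall_top_mem {V C : Type*} {top : V → C} {D₁ D₂ : Finset C}
    {W₁ W₂ : Finset V} (hD : Disjoint D₁ D₂) (hW₁ : ∀ i ∈ W₁, top i ∈ D₁)
    (hW₂ : ∀ i ∈ W₂, top i ∈ D₂) : Disjoint W₁ W₂ :=
  Finset.disjoint_left.mpr fun i hi₁ hi₂ => Finset.disjoint_left.mp hD (hW₁ i hi₁) (hW₂ i hi₂)

section
variable {V C : Type*} [Fintype V] [DecidableEq V] [DecidableEq C]

lemma remVotes_union_of_forall_ne (top : V → C) {W W' : Finset V} {c : C}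
    (h : ∀ i ∈ W', top i ≠ c) : remVotes top (W ∪ W') c = remVotes top W c := by
  unfold remVotes
  congr 1
  refine Finset.filter_congr fun i _ => ?_
  simp only [Finset.mem_union, not_or]
  exact ⟨fun ⟨ht, hW, _⟩ => ⟨ht, hW⟩, fun ⟨ht, hW⟩ => ⟨ht, hW, fun hi => h i hi ht⟩⟩

def activeVotes (top : V → C) (T : ℕ) (D : Finset C) (W : Finset V) (dd : C → ℕ) : ℕ :=
  ∑ c ∈ D.filter (fun c => T ≤ remVotes top W c + dd c), (remVotes top W c + dd c)

lemma activeVotes_eq_sum_ite (top : V → C) (T : ℕ) (D : Finset C) (W : Finset V)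
    (dd : C → ℕ) : activeVotes top T D W dd =
      ∑ c ∈ D, if T ≤ remVotes top W c + dd c then remVotes top W c + dd c else 0 :=
  Finset.sum_filter _ _

lemma activeVotes_congr (top : V → C) (T : ℕ) (D : Finset C) {W W' : Finset V}
    {dd dd' : C → ℕ} (hW : ∀ c ∈ D, remVotes top W c = remVotes top W' c)
    (hdd : ∀ c ∈ D, dd c = dd' c) : activeVotes top T D W dd = activeVotes top T D W' dd' := by
  simp only [activeVotes_eq_sum_ite]
  exact Finset.sum_congr rfl fun c hc => by rw [hW c hc, hdd c hc]

variable {top : V → C} {D₁ D₂ : Finset C} {W₁ W₂ : Finset V}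

lemma remVotes_union_of_mem_left (hD : Disjoint D₁ D₂) (hW₂ : ∀ i ∈ W₂, top i ∈ D₂)
    {c : C} (hc : c ∈ D₁) : remVotes top (W₁ ∪ W₂) c = remVotes top W₁ c :=
  remVotes_union_of_forall_ne top fun i hi hic =>
    Finset.disjoint_left.mp hD hc (hic ▸ hW₂ i hi)

lemma activeVotes_union (T : ℕ) (dd : C → ℕ) (hD : Disjoint D₁ D₂)
    (hW₁ : ∀ i ∈ W₁, top i ∈ D₁) (hW₂ : ∀ i ∈ W₂, top i ∈ D₂) :
    activeVotes top T (D₁ ∪ D₂) (W₁ ∪ W₂) dd =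
      activeVotes top T D₁ W₁ dd + activeVotes top T D₂ W₂ dd := by
  rw [activeVotes_eq_sum_ite, Finset.sum_union hD, ← activeVotes_eq_sum_ite,
    ← activeVotes_eq_sum_ite]
  congr 1
  · exact activeVotes_congr top T D₁ (fun c hc => remVotes_union_of_mem_left hD hW₂ hc)
      fun _ _ => rfl
  · refine activeVotes_congr top T D₂ (fun c hc => ?_) fun _ _ => rfl
    rw [Finset.union_comm]
    exact remVotes_union_of_mem_left hD.symm hW₁ hc

def IsFeasible (top : V → C) (T : ℕ) (D : Finset C) (ℓ d a : ℕ) (W : Finset V) : Prop :=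
  (∀ i ∈ W, top i ∈ D) ∧ W.card = ℓ ∧
    ∃ dd : C → ℕ, ∑ c ∈ D, dd c = d ∧ activeVotes top T D W dd = a

lemma IsFeasible.union {T ℓ₁ ℓ₂ d₁ d₂ a₁ a₂ : ℕ} (h₁ : IsFeasible top T D₁ ℓ₁ d₁ a₁ W₁)
    (h₂ : IsFeasible top T D₂ ℓ₂ d₂ a₂ W₂) (hD : Disjoint D₁ D₂) :
    IsFeasible top T (D₁ ∪ D₂) (ℓ₁ + ℓ₂) (d₁ + d₂) (a₁ + a₂) (W₁ ∪ W₂) := by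
  obtain ⟨hW₁, rfl, dd₁, rfl, rfl⟩ := h₁
  obtain ⟨hW₂, rfl, dd₂, rfl, rfl⟩ := h₂
  have hdd₁ : ∀ c ∈ D₁, D₁.piecewise dd₁ dd₂ c = dd₁ c := fun c hc =>
    D₁.piecewise_eq_of_mem _ _ hc
  have hdd₂ : ∀ c ∈ D₂, D₁.piecewise dd₁ dd₂ c = dd₂ c := fun c hc =>
    D₁.piecewise_eq_of_notMem _ _ (Finset.disjoint_right.mp hD hc)
  refine ⟨fun i hi => ?_, card_union_of_disjoint (disjoint_of_forall_top_mem hD hW₁ hW₂),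
    D₁.piecewise dd₁ dd₂, ?_, ?_⟩
  · rcases Finset.mem_union.mp hi with hi | hi
    exacts [mem_union_left _ (hW₁ i hi), mem_union_right _ (hW₂ i hi)]
  · rw [sum_union hD, sum_congr rfl hdd₁, sum_congr rfl hdd₂]
  · rw [activeVotes_union T _ hD hW₁ hW₂, activeVotes_congr top T D₁ (fun _ _ => rfl) hdd₁,
      activeVotes_congr top T D₂ (fun _ _ => rfl) hdd₂]

lemma IsFeasible.exists_union {T ℓ d a : ℕ} {W : Finset V}
    (h : IsFeasible top T (D₁ ∪ D₂) ℓ d a W) (hD : Disjoint D₁ D₂) :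
    ∃ W₁ W₂ ℓ₁ ℓ₂ d₁ d₂ a₁ a₂, W = W₁ ∪ W₂ ∧ ℓ = ℓ₁ + ℓ₂ ∧ d = d₁ + d₂ ∧ a = a₁ + a₂ ∧
      IsFeasible top T D₁ ℓ₁ d₁ a₁ W₁ ∧ IsFeasible top T D₂ ℓ₂ d₂ a₂ W₂ := by
  obtain ⟨hW, rfl, dd, rfl, rfl⟩ := h
  set W₁ := W.filter (top · ∈ D₁)
  set W₂ := W.filter (top · ∈ D₂)
  have hW₁ : ∀ i ∈ W₁, top i ∈ D₁ := fun i hi => (mem_filter.mp hi).2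
  have hW₂ : ∀ i ∈ W₂, top i ∈ D₂ := fun i hi => (mem_filter.mp hi).2
  have hWU : W = W₁ ∪ W₂ := by
    rw [← filter_or, filter_true_of_mem fun i hi => mem_union.mp (hW i hi)]
  refine ⟨W₁, W₂, _, _, _, _, _, _, hWU, ?_, sum_union hD, ?_, ⟨hW₁, rfl, dd, rfl, rfl⟩,
    ⟨hW₂, rfl, dd, rfl, rfl⟩⟩
  · rw [hWU, card_union_of_disjoint (disjoint_of_forall_top_mem hD hW₁ hW₂)]
  · rw [hWU]
    exact activeVotes_union T dd hD hW₁ hW₂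

def price (p : V → ℝ) (W : Finset V) : EReal := ((∑ i ∈ W, p i : ℝ) : EReal)

lemma H_eq_sInf_image (p : V → ℝ) (T : ℕ) (D : Finset C) (ℓ d a : ℕ) :
    H top p T D ℓ d a = sInf (price p '' {W | IsFeasible top T D ℓ d a W}) := by
  unfold H
  congr 1
  ext x
  simp only [Set.mem_ofPred_eq, Set.mem_image, IsFeasible, activeVotes, price, and_assoc, eq_comm]

lemma H_union_le (p : V → ℝ) (T : ℕ) (hD : Disjoint D₁ D₂) (ℓ₁ ℓ₂ d₁ d₂ a₁ a₂ : ℕ) :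
    H top p T (D₁ ∪ D₂) (ℓ₁ + ℓ₂) (d₁ + d₂) (a₁ + a₂) ≤
      H top p T D₁ ℓ₁ d₁ a₁ + H top p T D₂ ℓ₂ d₂ a₂ := by
  simp only [H_eq_sInf_image]
  have price_ne_bot : ∀ {S : Set (Finset V)}, ⊥ ∉ price p '' S :=
    fun ⟨_, _, h⟩ => EReal.coe_ne_bot _ h
  refine le_sInf_add_sInf_of_finite (Set.toFinite _) (Set.toFinite _) price_ne_bot price_ne_bot ?_
  rintro _ ⟨W₁, h₁, rfl⟩ _ ⟨W₂, h₂, rfl⟩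
  refine sInf_le ⟨W₁ ∪ W₂, h₁.union h₂ hD, ?_⟩
  rw [price, sum_union (disjoint_of_forall_top_mem hD h₁.1 h₂.1), EReal.coe_add]
  rfl

lemma iInf_le_H_union (p : V → ℝ) (T : ℕ) (hD : Disjoint D₁ D₂) (ℓ d a : ℕ) :
    ⨅ ℓ' ∈ range (ℓ + 1), ⨅ d' ∈ range (d + 1), ⨅ a' ∈ range (a + 1),
      H top p T D₁ ℓ' d' a' + H top p T D₂ (ℓ - ℓ') (d - d') (a - a') ≤
        H top p T (D₁ ∪ D₂) ℓ d a := by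
  rw [H_eq_sInf_image]
  refine le_sInf ?_
  rintro _ ⟨W, hW, rfl⟩
  obtain ⟨W₁, W₂, ℓ₁, ℓ₂, d₁, d₂, a₁, a₂, rfl, rfl, rfl, rfl, h₁, h₂⟩ := hW.exists_union hD
  refine (iInf₂_le ℓ₁ (by simp)).trans <| (iInf₂_le d₁ (by simp)).trans <|
    (iInf₂_le a₁ (by simp)).trans ?_
  simp only [Nat.add_sub_cancel_left, H_eq_sInf_image]
  rw [price, sum_union (disjoint_of_forall_top_mem hD h₁.1 h₂.1), EReal.coe_add]
  exact add_le_add (sInf_le ⟨W₁, h₁, rfl⟩) (sInf_le ⟨W₂, h₂, rfl⟩)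

theorem H_union (p : V → ℝ) (T : ℕ) (hD : Disjoint D₁ D₂) (ℓ d a : ℕ) :
    H top p T (D₁ ∪ D₂) ℓ d a =
      ⨅ ℓ' ∈ range (ℓ + 1), ⨅ d' ∈ range (d + 1), ⨅ a' ∈ range (a + 1),
        H top p T D₁ ℓ' d' a' + H top p T D₂ (ℓ - ℓ') (d - d') (a - a') := by
  refine le_antisymm (le_iInf₂ fun ℓ' hℓ => le_iInf₂ fun d' hd => le_iInf₂ fun a' ha => ?_)
    (iInf_le_H_union p T hD ℓ d a)
  simp only [mem_range, Nat.lt_succ_iff] at hℓ hd ha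
  simpa only [Nat.add_sub_cancel' hℓ, Nat.add_sub_cancel' hd, Nat.add_sub_cancel' ha] using
    H_union_le p T hD ℓ' (ℓ - ℓ') d' (d - d') a' (a - a')

end

theorem stmt_11_general {V C : Type*} [Fintype V] [DecidableEq V] [DecidableEq C]
    (top : V → C) (p : V → ℝ) (T : ℕ)
    (D : Finset C) (c : C) (hc : c ∉ D) (ℓ d a : ℕ) :
    H top p T (insert c D) ℓ d a =
      ⨅ ℓ' ∈ Finset.range (ℓ + 1), ⨅ d' ∈ Finset.range (d + 1),
        ⨅ a' ∈ Finset.range (a + 1),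
          H top p T D ℓ' d' a' + H top p T {c} (ℓ - ℓ') (d - d') (a - a') := by
  rw [← union_singleton]
  exact H_union p T (disjoint_singleton_right.mpr hc) ℓ d a

/-- the separability identity of the dynamic program:
`H(D∪{c}, ℓ, d, a) = min_{ℓ'≤ℓ, d'≤d, a'≤a} H(D,ℓ',d',a') + H({c}, ℓ−ℓ', d−d', a−a')`. -/
theorem stmt_11 {V C : Type*} [Fintype V] [DecidableEq V] [DecidableEq C]
    (top : V → C) (p : V → ℝ) (hp : ∀ i, 0 ≤ p i) (T : ℕ)
    (D : Finset C) (c : C) (hc : c ∉ D) (ℓ d a : ℕ) :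
    H top p T (insert c D) ℓ d a =
      ⨅ ℓ' ∈ Finset.range (ℓ + 1), ⨅ d' ∈ Finset.range (d + 1),
        ⨅ a' ∈ Finset.range (a + 1),
          H top p T D ℓ' d' a' + H top p T {c} (ℓ - ℓ') (d - d') (a - a') :=
  stmt_11_general top p T D c hc ℓ d a

end Stmt11
end

section
/- Let C be a finite set of m parties, c_1 ∈ C, and A ⊆ C with c_1 ∈ A. Let there be n voters, each voter i having an original linear order O_i on C and a nonnegative cost function π_i on linear orders of C (π_i(Ô) is the cost of changing voter i's order to Ô). Define h_i(k', k'_1) as the infimum of π_i(Ô) over linear orders Ô with Borda(Ô, A∖{c_1}) = k' and Borda(Ô, c_1) = k'_1, and define F(i, k_A, k_1) as the infimum of Σ_{j≤i} π_j(Ô_j) over tuples (Ô_1,…,Ô_i) of linear orders with Σ_{j≤i} Borda(Ô_j, A) = k_A and Σ_{j≤i} Borda(Ô_j, c_1) = k_1 (infima being ∞ when no such orders exist). Then F(1, k_A, k_1) = h_1(k_A − k_1, k_1), and for every 1 ≤ i < n: F(i+1, k_A, k_1) = min over integers k'_A, k'_1 with 0 ≤ k'_1 ≤ k'_A ≤ k_A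 and k'_1 ≤ k_1 of h_{i+1}(k'_A − k'_1, k'_1) + F(i, k_A − k'_A, k_1 − k'_1), with the conventions ∞ + x = ∞ and that the minimum over an empty set is ∞. -/
/-!
Splitting off the last voter, a bribery of voters `1, …, i+1` is a bribery of voters `1, …, i`
together with one order for voter `i+1`, and costs as well as Borda points add up. Every
infimum involved ranges over finitely many real costs, so it is either `⊤` or attained; with
attained infima the two sides of the recurrence bound each other.
-/

open Finset

namespace Stmt12

/-- The Borda score of party `c` under the linear order `O`:
`Borda(O,c) = m − pos(O,c)`, where `pos(O,c) = (O c).val + 1`. -/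
def borda {C : Type*} [Fintype C] (O : C ≃ Fin (Fintype.card C)) (c : C) : ℕ :=
  Fintype.card C - 1 - (O c).val

/-- The total Borda score of a set `S` of parties. -/
def bordaSum {C : Type*} [Fintype C] (O : C ≃ Fin (Fintype.card C)) (S : Finset C) : ℕ :=
  ∑ c ∈ S, borda O c

/-- `h_i(k', k'_1)`: the least cost of a bribe `Ob` of voter `i` with
`Borda(Ob, A∖{c₁}) = k'` and `Borda(Ob, c₁) = k'_1` (`⊤` if none exists). -/
noncomputable def hcost {C : Type*} [Fintype C] [DecidableEq C] (c1 : C) (A : Finset C)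
    (π : ℕ → (C ≃ Fin (Fintype.card C)) → ℝ) (i : ℕ) (k' k1 : ℤ) : EReal :=
  sInf { x : EReal | ∃ Ob : C ≃ Fin (Fintype.card C),
    (bordaSum Ob (A.erase c1) : ℤ) = k' ∧ (borda Ob c1 : ℤ) = k1 ∧
    x = ((π i Ob : ℝ) : EReal) }

/-- `F(i, k_A, k_1)`: the least total cost of bribes of voters `1, …, i` under which the
coalition `A` gets `k_A` Borda points and `c₁` gets `k_1` Borda points in total
(`⊤` if none exists). -/
noncomputable def Fcost {C : Type*} [Fintype C] [DecidableEq C] (c1 : C) (A : Finset C)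
    (π : ℕ → (C ≃ Fin (Fintype.card C)) → ℝ) (i : ℕ) (kA k1 : ℤ) : EReal :=
  sInf { x : EReal | ∃ Ob : ℕ → (C ≃ Fin (Fintype.card C)),
    (∑ j ∈ Finset.Icc 1 i, (bordaSum (Ob j) A : ℤ)) = kA ∧
    (∑ j ∈ Finset.Icc 1 i, (borda (Ob j) c1 : ℤ)) = k1 ∧
    x = ((∑ j ∈ Finset.Icc 1 i, π j (Ob j) : ℝ) : EReal) }

lemma _root_.EReal.sInf_mem_of_finite {S : Set EReal} (hS : S.Finite) (h : sInf S ≠ ⊤) :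
    sInf S ∈ S := by
  rcases S.eq_empty_or_nonempty with rfl | hne
  · exact absurd sInf_empty h
  · exact hne.csInf_mem hS

lemma _root_.Finset.sum_Icc_succ_update {β M : Type*} [AddCommMonoid M] (g : ℕ → β → M)
    (Ob : ℕ → β) (Os : β) (i : ℕ) :
    ∑ j ∈ Icc 1 (i + 1), g j (Function.update Ob (i + 1) Os j) =
      ∑ j ∈ Icc 1 i, g j (Ob j) + g (i + 1) Os := by
  rw [sum_Icc_succ_top (by omega), Function.update_self]
  congr 1
  refine sum_congr rfl fun j hj => ?_
  rw [Function.update_of_ne (by simp at hj; omega)]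

lemma bordaSum_eq_bordaSum_erase_add {C : Type*} [Fintype C] [DecidableEq C] {c1 : C}
    {A : Finset C} (hc1 : c1 ∈ A) (Ob : C ≃ Fin (Fintype.card C)) :
    bordaSum Ob A = bordaSum Ob (A.erase c1) + borda Ob c1 := by
  rw [bordaSum, bordaSum, ← add_sum_erase A _ hc1, add_comm]

section

variable {C : Type*} [Fintype C] [DecidableEq C] (c1 : C) (A : Finset C)
  (π : ℕ → (C ≃ Fin (Fintype.card C)) → ℝ)

lemma exists_hcost_eq {i : ℕ} {k' k1 : ℤ} (h : hcost c1 A π i k' k1 ≠ ⊤) :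
    ∃ Ob : C ≃ Fin (Fintype.card C),
      (bordaSum Ob (A.erase c1) : ℤ) = k' ∧ (borda Ob c1 : ℤ) = k1 ∧
      hcost c1 A π i k' k1 = π i Ob :=
  EReal.sInf_mem_of_finite ((Set.finite_range fun Ob => (π i Ob : EReal)).subset <| by
    rintro x ⟨Ob, -, -, rfl⟩
    exact ⟨Ob, rfl⟩) h

lemma exists_Fcost_eq {i : ℕ} {kA k1 : ℤ} (h : Fcost c1 A π i kA k1 ≠ ⊤) :
    ∃ Ob : ℕ → (C ≃ Fin (Fintype.card C)),
      (∑ j ∈ Icc 1 i, (bordaSum (Ob j) A : ℤ)) = kA ∧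
      (∑ j ∈ Icc 1 i, (borda (Ob j) c1 : ℤ)) = k1 ∧
      Fcost c1 A π i kA k1 = ((∑ j ∈ Icc 1 i, π j (Ob j) : ℝ) : EReal) :=
  -- a total cost only depends on the orders of the voters in `Icc 1 i`
  EReal.sInf_mem_of_finite ((Set.finite_range fun v : Icc 1 i → C ≃ Fin (Fintype.card C) =>
      ((∑ j : Icc 1 i, π j (v j) : ℝ) : EReal)).subset <| by
    rintro x ⟨Ob, -, -, rfl⟩
    exact ⟨fun j => Ob j, congrArg _ (sum_coe_sort (Icc 1 i) fun j => π j (Ob j))⟩) h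

lemma hcost_ne_bot (i : ℕ) (k' k1 : ℤ) : hcost c1 A π i k' k1 ≠ ⊥ := by
  by_cases h : hcost c1 A π i k' k1 = ⊤
  · simp [h]
  · obtain ⟨_, _, _, he⟩ := exists_hcost_eq c1 A π h
    simp [he]

lemma Fcost_ne_bot (i : ℕ) (kA k1 : ℤ) : Fcost c1 A π i kA k1 ≠ ⊥ := by
  by_cases h : Fcost c1 A π i kA k1 = ⊤
  · simp [h]
  · obtain ⟨_, _, _, he⟩ := exists_Fcost_eq c1 A π h
    simp [he]

variable {c1 A}

theorem Fcost_one (hc1 : c1 ∈ A) (kA k1 : ℤ) :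
    Fcost c1 A π 1 kA k1 = hcost c1 A π 1 (kA - k1) k1 := by
  unfold Fcost hcost
  congr 1
  ext x
  simp only [Icc_self, sum_singleton, Set.mem_ofPred_eq]
  constructor
  · rintro ⟨Ob, hA, h1, rfl⟩
    have := bordaSum_eq_bordaSum_erase_add hc1 (Ob 1)
    exact ⟨Ob 1, by omega, h1, rfl⟩
  · rintro ⟨Ob, hA, h1, rfl⟩
    have : bordaSum Ob A = bordaSum Ob (A.erase c1) + borda Ob c1 :=
      bordaSum_eq_bordaSum_erase_add hc1 Ob
    exact ⟨fun _ => Ob, show (bordaSum Ob A : ℤ) = kA by omega, h1, rfl⟩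

lemma Fcost_succ_le (hc1 : c1 ∈ A) (i : ℕ) (kA k1 kA' k1' : ℤ) :
    Fcost c1 A π (i + 1) kA k1 ≤
      hcost c1 A π (i + 1) (kA' - k1') k1' + Fcost c1 A π i (kA - kA') (k1 - k1') := by
  by_cases hh : hcost c1 A π (i + 1) (kA' - k1') k1' = ⊤
  · rw [hh, EReal.top_add_of_ne_bot (Fcost_ne_bot c1 A π _ _ _)]
    exact le_top
  by_cases hF : Fcost c1 A π i (kA - kA') (k1 - k1') = ⊤
  · rw [hF, EReal.add_top_of_ne_bot (hcost_ne_bot c1 A π _ _ _)]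
    exact le_top
  obtain ⟨Os, hOsA, hOs1, hOs⟩ := exists_hcost_eq c1 A π hh
  obtain ⟨Ob, hObA, hOb1, hOb⟩ := exists_Fcost_eq c1 A π hF
  have hsplit := bordaSum_eq_bordaSum_erase_add hc1 Os
  refine sInf_le ⟨Function.update Ob (i + 1) Os, ?_, ?_, ?_⟩
  · rw [sum_Icc_succ_update (fun j O => (bordaSum O A : ℤ))]
    omega
  · rw [sum_Icc_succ_update (fun j O => (borda O c1 : ℤ))]
    omega
  · rw [sum_Icc_succ_update π, hOs, hOb, EReal.coe_add, add_comm]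

lemma le_Fcost_succ (hc1 : c1 ∈ A) (i : ℕ) (kA k1 : ℤ) :
    sInf { x : EReal | ∃ kA' k1' : ℤ, 0 ≤ k1' ∧ k1' ≤ kA' ∧ kA' ≤ kA ∧ k1' ≤ k1 ∧
      x = hcost c1 A π (i + 1) (kA' - k1') k1' +
        Fcost c1 A π i (kA - kA') (k1 - k1') } ≤
      Fcost c1 A π (i + 1) kA k1 := by
  refine le_sInf ?_
  rintro x ⟨Ob, hA, h1, rfl⟩
  rw [sum_Icc_succ_top (by omega)] at hA h1
  have hrestA : 0 ≤ ∑ j ∈ Icc 1 i, (bordaSum (Ob j) A : ℤ) := sum_nonneg fun _ _ => by omega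
  have hrest1 : 0 ≤ ∑ j ∈ Icc 1 i, (borda (Ob j) c1 : ℤ) := sum_nonneg fun _ _ => by omega
  have hsplit := bordaSum_eq_bordaSum_erase_add hc1 (Ob (i + 1))
  refine sInf_le_of_le ⟨bordaSum (Ob (i + 1)) A, borda (Ob (i + 1)) c1,
    by omega, by omega, by omega, by omega, rfl⟩ ?_
  rw [sum_Icc_succ_top (by omega), EReal.coe_add, add_comm (_ : EReal) (π (i + 1) _)]
  exact add_le_add (sInf_le ⟨Ob (i + 1), by omega, rfl, rfl⟩)
    (sInf_le ⟨Ob, by omega, by omega, rfl⟩)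

theorem Fcost_succ (hc1 : c1 ∈ A) (i : ℕ) (kA k1 : ℤ) :
    Fcost c1 A π (i + 1) kA k1 =
      sInf { x : EReal | ∃ kA' k1' : ℤ, 0 ≤ k1' ∧ k1' ≤ kA' ∧ kA' ≤ kA ∧ k1' ≤ k1 ∧
        x = hcost c1 A π (i + 1) (kA' - k1') k1' +
          Fcost c1 A π i (kA - kA') (k1 - k1') } :=
  le_antisymm
    (le_sInf <| by rintro x ⟨kA', k1', -, -, -, -, rfl⟩; exact Fcost_succ_le π hc1 ..)
    (le_Fcost_succ π hc1 i kA k1)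

end

theorem stmt_12_general {C : Type*} [Fintype C] [DecidableEq C] (c1 : C) (A : Finset C)
    (hc1 : c1 ∈ A) (n : ℕ)
    (π : ℕ → (C ≃ Fin (Fintype.card C)) → ℝ) :
    (∀ kA k1 : ℤ, Fcost c1 A π 1 kA k1 = hcost c1 A π 1 (kA - k1) k1) ∧
    (∀ i : ℕ, 1 ≤ i → i < n → ∀ kA k1 : ℤ,
      Fcost c1 A π (i + 1) kA k1 =
        sInf { x : EReal | ∃ kA' k1' : ℤ,
          0 ≤ k1' ∧ k1' ≤ kA' ∧ kA' ≤ kA ∧ k1' ≤ k1 ∧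
          x = hcost c1 A π (i + 1) (kA' - k1') k1' +
              Fcost c1 A π i (kA - kA') (k1 - k1') }) :=
  ⟨Fcost_one π hc1, fun i _ _ => Fcost_succ π hc1 i⟩

/-- the dynamic-programming recurrence for `F`:
`F(1,k_A,k_1) = h_1(k_A−k_1, k_1)` and, for `1 ≤ i < n`,
`F(i+1,k_A,k_1) = min h_{i+1}(k'_A−k'_1,k'_1) + F(i, k_A−k'_A, k_1−k'_1)`
over `0 ≤ k'_1 ≤ k'_A ≤ k_A`, `k'_1 ≤ k_1`. -/
theorem stmt_12 {C : Type*} [Fintype C] [DecidableEq C] (c1 : C) (A : Finset C)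
    (hc1 : c1 ∈ A) (n : ℕ)
    (O : ℕ → (C ≃ Fin (Fintype.card C)))
    (π : ℕ → (C ≃ Fin (Fintype.card C)) → ℝ) (hπ : ∀ i Ob, 0 ≤ π i Ob) :
    (∀ kA k1 : ℤ, Fcost c1 A π 1 kA k1 = hcost c1 A π 1 (kA - k1) k1) ∧
    (∀ i : ℕ, 1 ≤ i → i < n → ∀ kA k1 : ℤ,
      Fcost c1 A π (i + 1) kA k1 =
        sInf { x : EReal | ∃ kA' k1' : ℤ,
          0 ≤ k1' ∧ k1' ≤ kA' ∧ kA' ≤ kA ∧ k1' ≤ k1 ∧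
          x = hcost c1 A π (i + 1) (kA' - k1') k1' +
              Fcost c1 A π i (kA - kA') (k1 - k1') }) :=
  stmt_12_general c1 A hc1 n π

end Stmt12
end

section
/- Let O and Ô be linear orders on a finite set C of parties, let A ⊆ C, c_1 ∈ A, and let a, b ∈ A∖{c_1} be parties with a above b in O but b above a in Ô. Let Ô' be the linear order obtained from Ô by exchanging the positions of a and b. Then: (1) Borda(Ô', c_1) = Borda(Ô, c_1); (2) Borda(Ô', A∖{c_1}) = Borda(Ô, A∖{c_1}); (3) the number of inverted pairs of (O, Ô') is strictly smaller than the number of inverted pairs of (O, Ô); and (4) if Ô satisfies that for every x ∈ A and y ∉ A, x above y in O implies x above y in Ô, then Ô' satisfies the same property. -/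
/-!
Exchanging `a` and `b` permutes `A ∖ {c₁}` and fixes `c₁` and every party outside `A`, which
gives the Borda and the `A`-above-complement claims. For the inversions, send an inverted pair
`(x, y)` of `(O, Ô')` to `(σ x, σ y)`, with `σ` the transposition, when `O` still ranks `σ x`
above `σ y`, and to `(x, y)` itself otherwise: this injects the inverted pairs of `(O, Ô')` into
those of `(O, Ô)` other than `(a, b)`.
-/

open Finset

namespace Stmt14

/-- The Borda score of party `c` under the linear order `O`:
`Borda(O,c) = m − pos(O,c)`, where `pos(O,c) = (O c).val + 1`. -/
def borda {C : Type*} [Fintype C] (O : C ≃ Fin (Fintype.card C)) (c : C) : ℕ :=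
  Fintype.card C - 1 - (O c).val

def bordaSum {C : Type*} [Fintype C] (O : C ≃ Fin (Fintype.card C)) (S : Finset C) : ℕ :=
  ∑ c ∈ S, borda O c

def invPairs {C : Type*} [Fintype C] [DecidableEq C]
    (O Ob : C ≃ Fin (Fintype.card C)) : Finset (C × C) :=
  (Finset.univ : Finset (C × C)).filter fun q => O q.1 < O q.2 ∧ Ob q.2 < Ob q.1

section Swap

variable {C : Type*} [Fintype C]

theorem borda_trans (σ : Equiv.Perm C) (O : C ≃ Fin (Fintype.card C)) (c : C) :
    borda (σ.trans O) c = borda O (σ c) :=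
  rfl

variable [DecidableEq C]

omit [Fintype C] in
theorem swap_apply_of_notMem {S : Finset C} {a b x : C} (ha : a ∈ S) (hb : b ∈ S)
    (hx : x ∉ S) : Equiv.swap a b x = x :=
  Equiv.swap_apply_of_ne_of_ne (ne_of_mem_of_not_mem ha hx).symm (ne_of_mem_of_not_mem hb hx).symm

theorem borda_swap_trans_of_ne (O : C ≃ Fin (Fintype.card C)) {a b c : C}
    (hca : c ≠ a) (hcb : c ≠ b) : borda ((Equiv.swap a b).trans O) c = borda O c := by
  rw [borda_trans, Equiv.swap_apply_of_ne_of_ne hca hcb]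

theorem bordaSum_swap_trans (O : C ≃ Fin (Fintype.card C)) {S : Finset C} {a b : C}
    (ha : a ∈ S) (hb : b ∈ S) : bordaSum ((Equiv.swap a b).trans O) S = bordaSum O S := by
  refine (Equiv.swap a b).sum_comp S (borda O) fun x hx => ?_
  by_contra hxS
  exact hx (swap_apply_of_notMem ha hb hxS)

theorem forall_swap_trans_lt_of_forall_lt {A : Finset C} {O P : C ≃ Fin (Fintype.card C)}
    {a b : C} (ha : a ∈ A) (hb : b ∈ A) (hO : O a < O b) (hP : P b < P a)
    (hA : ∀ x ∈ A, ∀ y ∉ A, O x < O y → P x < P y) :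
    ∀ x ∈ A, ∀ y ∉ A, O x < O y →
      ((Equiv.swap a b).trans P) x < ((Equiv.swap a b).trans P) y := by
  intro x hx y hy hxy
  simp only [Equiv.trans_apply, swap_apply_of_notMem ha hb hy]
  rw [Equiv.swap_apply_def]
  split_ifs with hxa hxb
  · subst hxa; exact hP.trans (hA x hx y hy hxy)
  · subst hxb; exact hA a ha y hy (hO.trans hxy)
  · exact hA x hx y hy hxy

@[simp]
theorem mem_invPairs {O P : C ≃ Fin (Fintype.card C)} {x y : C} :
    (x, y) ∈ invPairs O P ↔ O x < O y ∧ P y < P x := by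
  simp [invPairs]

section Inversions

variable {O P : C ≃ Fin (Fintype.card C)} {a b : C}

theorem pair_notMem_invPairs_swap_trans (hP : P b < P a) :
    (a, b) ∉ invPairs O ((Equiv.swap a b).trans P) := by
  simp [hP.le]

theorem swap_pair_mem_invPairs_erase (hO : O a < O b) {x y : C}
    (h : (x, y) ∈ invPairs O ((Equiv.swap a b).trans P))
    (hσ : O (Equiv.swap a b x) < O (Equiv.swap a b y)) :
    (Equiv.swap a b x, Equiv.swap a b y) ∈ (invPairs O P).erase (a, b) := by
  simp only [mem_erase, mem_invPairs, Equiv.trans_apply, ne_eq, Prod.mk.injEq] at h ⊢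
  refine ⟨fun ⟨hxa, hyb⟩ => ?_, hσ, h.2⟩
  rw [Equiv.swap_apply_eq_iff, Equiv.swap_apply_left] at hxa
  rw [Equiv.swap_apply_eq_iff, Equiv.swap_apply_right] at hyb
  subst hxa hyb
  exact h.1.not_gt hO

theorem mem_invPairs_erase_of_swap_le (hO : O a < O b) (hP : P b < P a) {x y : C}
    (h : (x, y) ∈ invPairs O ((Equiv.swap a b).trans P))
    (hσ : O (Equiv.swap a b y) ≤ O (Equiv.swap a b x)) :
    (x, y) ∈ (invPairs O P).erase (a, b) := by
  refine mem_erase.2 ⟨fun hxy => pair_notMem_invPairs_swap_trans hP (hxy ▸ h), ?_⟩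
  simp only [mem_invPairs, Equiv.trans_apply] at h ⊢
  refine ⟨h.1, ?_⟩
  -- Only pairs meeting `{a, b}` in one party need thought: `(a, y)` has `P y < P b < P a`,
  -- and `(x, b)` has `P b < P a < P x`.
  rw [Equiv.swap_apply_def, Equiv.swap_apply_def] at h hσ
  split_ifs at h hσ <;> subst_vars <;> grind

theorem card_invPairs_swap_trans_lt (hO : O a < O b) (hP : P b < P a) :
    #(invPairs O ((Equiv.swap a b).trans P)) < #(invPairs O P) := by
  set σ := Equiv.swap a b
  let f : C × C → C × C := fun p => if O (σ p.1) < O (σ p.2) then Prod.map σ σ p else p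
  have hf : Set.MapsTo f (invPairs O (σ.trans P)) ((invPairs O P).erase (a, b)) := by
    rintro ⟨x, y⟩ h
    by_cases hσ : O (σ x) < O (σ y)
    · simp only [f, if_pos hσ]
      exact swap_pair_mem_invPairs_erase hO h hσ
    · simp only [f, if_neg hσ]
      exact mem_invPairs_erase_of_swap_le hO hP h (not_lt.1 hσ)
  have hinj : Set.InjOn f (invPairs O (σ.trans P)) := by
    rintro ⟨x, y⟩ hp ⟨x', y'⟩ hq hpq
    simp only [mem_coe, mem_invPairs] at hp hq
    simp only [f] at hpq
    split_ifs at hpq with h h' h'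
    · simpa using hpq
    · obtain ⟨rfl, rfl⟩ := Prod.mk.inj hpq
      simp [σ] at h'
      exact absurd hp.1 h'.not_gt
    · obtain ⟨rfl, rfl⟩ := Prod.mk.inj hpq
      simp [σ] at h
      exact absurd hq.1 h.not_gt
    · exact hpq
  calc #(invPairs O (σ.trans P)) ≤ #((invPairs O P).erase (a, b)) :=
        card_le_card_of_injOn f hf hinj
    _ < #(invPairs O P) := card_erase_lt_of_mem (by simp [hO, hP])

end Inversions

end Swap

theorem stmt_14_general {C : Type*} [Fintype C] [DecidableEq C]
    (O Ob : C ≃ Fin (Fintype.card C)) (A : Finset C) (c1 : C)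
    (a b : C) (ha : a ∈ A.erase c1) (hb : b ∈ A.erase c1)
    (hO : O a < O b) (hOb : Ob b < Ob a) :
    borda ((Equiv.swap a b).trans Ob) c1 = borda Ob c1 ∧
    bordaSum ((Equiv.swap a b).trans Ob) (A.erase c1) = bordaSum Ob (A.erase c1) ∧
    (invPairs O ((Equiv.swap a b).trans Ob)).card < (invPairs O Ob).card ∧
    ((∀ x ∈ A, ∀ y ∉ A, O x < O y → Ob x < Ob y) →
      (∀ x ∈ A, ∀ y ∉ A, O x < O y →
        ((Equiv.swap a b).trans Ob) x < ((Equiv.swap a b).trans Ob) y)) := by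
  obtain ⟨hac, haA⟩ := mem_erase.1 ha
  obtain ⟨hbc, hbA⟩ := mem_erase.1 hb
  exact ⟨borda_swap_trans_of_ne Ob hac.symm hbc.symm, bordaSum_swap_trans Ob ha hb,
    card_invPairs_swap_trans_lt hO hOb, forall_swap_trans_lt_of_forall_lt haA hbA hO hOb⟩

/-- exchanging the positions (in `Ob`) of two parties `a, b ∈ A∖{c₁}`
with `a` above `b` in `O` but `b` above `a` in `Ob` preserves the Borda scores of `c₁`
and of `A∖{c₁}`, strictly decreases the number of inverted pairs, and preserves the
property that no party of `A` drops below a party outside `A`. -/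
theorem stmt_14 {C : Type*} [Fintype C] [DecidableEq C]
    (O Ob : C ≃ Fin (Fintype.card C)) (A : Finset C) (c1 : C) (hc1 : c1 ∈ A)
    (a b : C) (ha : a ∈ A.erase c1) (hb : b ∈ A.erase c1)
    (hO : O a < O b) (hOb : Ob b < Ob a) :
    borda ((Equiv.swap a b).trans Ob) c1 = borda Ob c1 ∧
    bordaSum ((Equiv.swap a b).trans Ob) (A.erase c1) = bordaSum Ob (A.erase c1) ∧
    (invPairs O ((Equiv.swap a b).trans Ob)).card < (invPairs O Ob).card ∧
    ((∀ x ∈ A, ∀ y ∉ A, O x < O y → Ob x < Ob y) →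
      (∀ x ∈ A, ∀ y ∉ A, O x < O y →
        ((Equiv.swap a b).trans Ob) x < ((Equiv.swap a b).trans Ob) y)) :=
  stmt_14_general O Ob A c1 a b ha hb hO hOb

end Stmt14
end

section
/- Let C be a finite set of parties partitioned into three classes: {c_1}, A₋₁, and Ā. Let there be n voters, voter i having a linear order O_i on C and a nonnegative swap-price function sw_i : C × C → ℝ≥0, where the swap cost of a linear order Ô relative to O_i is the sum of sw_i(x,y) over all inverted pairs (x,y) of (O_i,Ô). For a voter i and a class κ ∈ {{c_1}, A₋₁, Ā}, let δ_i(κ) = min over parties c ∈ κ of Σ_{x above c in O_i} sw_i(x,c). Then for all integers k_1, k_2 ≥ 0 with k_1 + k_2 ≤ n, the minimum of Σ_i (swap cost of Ô_i relative to O_i) over all tuples (Ô_1,…,Ô_n) of linear orders with |{i : the top party of Ô_i is c_1}| = k_1 and |{i : the top party of Ô_i is in A₋₁}| = k_2 equals the minimum over functions α assigning each voter one of the three classes, with exactly k_1 voters assigned {c_1} and exactly k_2 voters assigned A₋₁, of Σ_i δ_i(α(i)). -/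
open Finset

namespace Stmt16

/-- The inverted pairs of `(O, Ob)`: pairs `(x, y)` with `y` below `x` in `O`
and `y` above `x` in `Ob`. -/
def invPairs {C : Type*} [Fintype C] [DecidableEq C]
    (O Ob : C ≃ Fin (Fintype.card C)) : Finset (C × C) :=
  (Finset.univ : Finset (C × C)).filter fun q => O q.1 < O q.2 ∧ Ob q.2 < Ob q.1

/-- `δ_i(κ)`: the minimum over the parties `c` of the class `κ` (class `0` is `{c₁}`,
class `1` is `A₋₁`, class `2` is `Ā`) of `Σ_{x above c in O_i} sw_i(x,c)`. -/
noncomputable def delta {C : Type*} [Fintype C] [DecidableEq C] {n : ℕ}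
    (c1 : C) (A1 Abar : Finset C) (hA1 : A1.Nonempty) (hAbar : Abar.Nonempty)
    (O : Fin n → (C ≃ Fin (Fintype.card C))) (sw : Fin n → C → C → ℝ)
    (i : Fin n) (κ : Fin 3) : ℝ :=
  if κ = 0 then
    ∑ x ∈ Finset.univ.filter (fun x => O i x < O i c1), sw i x c1
  else if κ = 1 then
    A1.inf' hA1 (fun c => ∑ x ∈ Finset.univ.filter (fun x => O i x < O i c), sw i x c)
  else
    Abar.inf' hAbar (fun c => ∑ x ∈ Finset.univ.filter (fun x => O i x < O i c), sw i x c)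

/-
Moving a party `c` to the top of `O` (rotating the parties above it down by one place) inverts
exactly the pairs `(x, c)` with `x` above `c`, so it costs `Σ_{x above c} sw(x, c)`; conversely any
order with top party `c` inverts all these pairs, so with nonnegative prices it costs at least as
much. Hence the cheapest bribe with prescribed tops is obtained by promoting, for each voter, the
cheapest party of the class its top is required to lie in, and the two minima agree.
-/

theorem _root_.Fin.coe_cycleRange_apply {m : ℕ} (p j : Fin m) :
    (p.cycleRange j : ℕ) = if j < p then (j : ℕ) + 1 else if j = p then 0 else (j : ℕ) := by
  rcases le_or_gt j p with h | h
  · rw [Fin.coe_cycleRange_of_le h]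
    rcases h.lt_or_eq with h' | rfl
    · simp [h', h'.ne]
    · simp
  · simp [Fin.cycleRange_of_gt h, h.not_gt, h.ne']

theorem _root_.Fin.cycleRange_lt_cycleRange_iff {m : ℕ} {p a b : Fin m} (hab : a < b) :
    p.cycleRange b < p.cycleRange a ↔ b = p := by
  rw [Fin.lt_def, Fin.coe_cycleRange_apply, Fin.coe_cycleRange_apply]
  rw [Fin.lt_def] at hab
  split_ifs <;> simp only [Fin.lt_def, Fin.ext_iff] at * <;> omega

section Promotion

variable {C : Type*} [Fintype C]

def promote (O : C ≃ Fin (Fintype.card C)) (c : C) : C ≃ Fin (Fintype.card C) :=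
  O.trans (Fin.cycleRange (O c))

def promoteCost (O : C ≃ Fin (Fintype.card C)) (g : C → C → ℝ) (c : C) : ℝ :=
  ∑ x ∈ univ.filter (fun x => O x < O c), g x c

theorem val_promote_apply_self (O : C ≃ Fin (Fintype.card C)) (c : C) :
    (promote O c c).val = 0 := by
  simp [promote, Fin.coe_cycleRange_apply]

theorem invPairs_promote [DecidableEq C] (O : C ≃ Fin (Fintype.card C)) (c : C) :
    invPairs O (promote O c) = (univ.filter fun x => O x < O c).image (fun x => (x, c)) := by
  ext ⟨x, y⟩
  rw [invPairs, mem_filter]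
  simp only [promote, mem_univ, true_and, mem_filter, mem_image, Prod.mk.injEq,
    Equiv.trans_apply]
  constructor
  · rintro ⟨hxy, hinv⟩
    obtain rfl := O.injective ((Fin.cycleRange_lt_cycleRange_iff hxy).1 hinv)
    exact ⟨x, hxy, rfl, rfl⟩
  · rintro ⟨x, hx, rfl, rfl⟩
    exact ⟨hx, (Fin.cycleRange_lt_cycleRange_iff hx).2 rfl⟩

theorem sum_invPairs_promote [DecidableEq C] (O : C ≃ Fin (Fintype.card C)) (g : C → C → ℝ)
    (c : C) :
    ∑ q ∈ invPairs O (promote O c), g q.1 q.2 = promoteCost O g c := by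
  rw [invPairs_promote, sum_image fun x _ y _ h => (Prod.mk.inj h).1]
  rfl

theorem val_apply_eq_zero_iff {Ob : C ≃ Fin (Fintype.card C)} {t : C} (ht : (Ob t).val = 0)
    (c : C) : (Ob c).val = 0 ↔ c = t := by
  rw [← ht, ← Fin.ext_iff, Ob.apply_eq_iff_eq]

theorem promoteCost_le_sum_invPairs [DecidableEq C] (O Ob : C ≃ Fin (Fintype.card C))
    {g : C → C → ℝ} (hg : ∀ x y, 0 ≤ g x y) {t : C} (ht : (Ob t).val = 0) :
    promoteCost O g t ≤ ∑ q ∈ invPairs O Ob, g q.1 q.2 := by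
  rw [← sum_invPairs_promote O g t, invPairs_promote]
  refine sum_le_sum_of_subset_of_nonneg ?_ fun q _ _ => hg q.1 q.2
  intro q hq
  obtain ⟨x, hx, rfl⟩ := mem_image.1 hq
  have hxt : x ≠ t := by rintro rfl; simp at hx
  rw [invPairs, mem_filter]
  refine ⟨mem_univ _, (mem_filter.1 hx).2, ?_⟩
  rw [Fin.lt_def, ht, Nat.pos_iff_ne_zero, Ne, val_apply_eq_zero_iff ht]
  exact hxt

end Promotion

section Classes

variable {C : Type*} [DecidableEq C] {c1 : C} {A1 : Finset C}

def partyClass (c1 : C) (A1 : Finset C) (c : C) : Fin 3 :=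
  if c = c1 then 0 else if c ∈ A1 then 1 else 2

theorem partyClass_eq_zero_iff {c : C} : partyClass c1 A1 c = 0 ↔ c = c1 := by
  unfold partyClass
  split_ifs <;> simp_all

theorem partyClass_eq_one_iff (hd1 : c1 ∉ A1) {c : C} : partyClass c1 A1 c = 1 ↔ c ∈ A1 := by
  unfold partyClass
  split_ifs <;> simp_all

variable [Fintype C] {n : ℕ}

theorem filter_c1_top (Ob : Fin n → C ≃ Fin (Fintype.card C)) (t : Fin n → C)
    (ht : ∀ i, (Ob i (t i)).val = 0) :
    univ.filter (fun i => (Ob i c1).val = 0) = univ.filter (fun i => partyClass c1 A1 (t i) = 0) :=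
  filter_congr fun i _ => by rw [val_apply_eq_zero_iff (ht i), partyClass_eq_zero_iff, eq_comm]

theorem filter_A1_top (hd1 : c1 ∉ A1) (Ob : Fin n → C ≃ Fin (Fintype.card C))
    (t : Fin n → C) (ht : ∀ i, (Ob i (t i)).val = 0) :
    univ.filter (fun i => ∃ c ∈ A1, (Ob i c).val = 0) =
      univ.filter (fun i => partyClass c1 A1 (t i) = 1) :=
  filter_congr fun i _ => by simp [val_apply_eq_zero_iff (ht i), partyClass_eq_one_iff hd1]

variable {Abar : Finset C} (hA1 : A1.Nonempty) (hAbar : Abar.Nonempty)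
  (O : Fin n → (C ≃ Fin (Fintype.card C))) (sw : Fin n → C → C → ℝ)

theorem exists_promoteCost_eq_delta (hd1 : c1 ∉ A1) (hd2 : c1 ∉ Abar) (hd3 : Disjoint A1 Abar)
    (i : Fin n) (κ : Fin 3) :
    ∃ c, partyClass c1 A1 c = κ ∧
      promoteCost (O i) (sw i) c = delta c1 A1 Abar hA1 hAbar O sw i κ := by
  fin_cases κ
  · exact ⟨c1, partyClass_eq_zero_iff.2 rfl, rfl⟩
  · obtain ⟨c, hc, hmin⟩ := A1.exists_mem_eq_inf' hA1 (promoteCost (O i) (sw i))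
    exact ⟨c, (partyClass_eq_one_iff hd1).2 hc, hmin.symm⟩
  · obtain ⟨c, hc, hmin⟩ := Abar.exists_mem_eq_inf' hAbar (promoteCost (O i) (sw i))
    have hcA1 : c ∉ A1 := disjoint_right.1 hd3 hc
    have hcc1 : c ≠ c1 := by rintro rfl; exact hd2 hc
    exact ⟨c, by simp [partyClass, hcA1, hcc1], hmin.symm⟩

theorem delta_partyClass_le (hpart : ({c1} : Finset C) ∪ A1 ∪ Abar = Finset.univ)
    (i : Fin n) (c : C) :
    delta c1 A1 Abar hA1 hAbar O sw i (partyClass c1 A1 c) ≤ promoteCost (O i) (sw i) c := by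
  unfold partyClass
  split_ifs with hc1 hA
  · subst hc1; rfl
  · exact inf'_le _ hA
  · have hmem : c ∈ ({c1} : Finset C) ∪ A1 ∪ Abar := hpart ▸ mem_univ c
    simp only [mem_union, mem_singleton, hc1, hA, false_or] at hmem
    exact inf'_le _ hmem

end Classes

theorem stmt_16_general {C : Type*} [Fintype C] [DecidableEq C]
    (c1 : C) (A1 Abar : Finset C)
    (hpart : ({c1} : Finset C) ∪ A1 ∪ Abar = Finset.univ)
    (hd1 : c1 ∉ A1) (hd2 : c1 ∉ Abar) (hd3 : Disjoint A1 Abar)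
    (hA1 : A1.Nonempty) (hAbar : Abar.Nonempty)
    (n : ℕ) (O : Fin n → (C ≃ Fin (Fintype.card C)))
    (sw : Fin n → C → C → ℝ) (hsw : ∀ i x y, 0 ≤ sw i x y)
    (k1 k2 : ℕ) :
    sInf { x : ℝ | ∃ Ob : Fin n → (C ≃ Fin (Fintype.card C)),
        (Finset.univ.filter fun i => ((Ob i) c1).val = 0).card = k1 ∧
        (Finset.univ.filter fun i => ∃ c ∈ A1, ((Ob i) c).val = 0).card = k2 ∧
        x = ∑ i, ∑ q ∈ invPairs (O i) (Ob i), sw i q.1 q.2 } =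
    sInf { x : ℝ | ∃ α : Fin n → Fin 3,
        (Finset.univ.filter fun i => α i = 0).card = k1 ∧
        (Finset.univ.filter fun i => α i = 1).card = k2 ∧
        x = ∑ i, delta c1 A1 Abar hA1 hAbar O sw i (α i) } := by
  apply csInf_eq_csInf_of_forall_exists_le
  · rintro _ ⟨Ob, h1, h2, rfl⟩
    have hC : 0 < Fintype.card C := Fintype.card_pos_iff.2 ⟨c1⟩
    choose t ht using fun i => (⟨(Ob i).symm ⟨0, hC⟩, by simp⟩ : ∃ t, (Ob i t).val = 0)
    refine ⟨_, ⟨fun i => partyClass c1 A1 (t i), ?_, ?_, rfl⟩, sum_le_sum fun i _ => ?_⟩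
    · rwa [← filter_c1_top Ob t ht]
    · rwa [← filter_A1_top hd1 Ob t ht]
    · exact (delta_partyClass_le hA1 hAbar O sw hpart i (t i)).trans
        (promoteCost_le_sum_invPairs _ _ (hsw i) (ht i))
  · rintro _ ⟨α, h1, h2, rfl⟩
    choose c hc hcost using exists_promoteCost_eq_delta hA1 hAbar O sw hd1 hd2 hd3
    have htop i : (promote (O i) (c i (α i)) (c i (α i))).val = 0 := val_promote_apply_self _ _
    refine ⟨_, ⟨fun i => promote (O i) (c i (α i)), ?_, ?_, rfl⟩,
      (sum_congr rfl fun i _ => ?_).le⟩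
    · rw [filter_c1_top (A1 := A1) _ _ htop]
      simpa only [hc] using h1
    · rw [filter_A1_top hd1 _ _ htop]
      simpa only [hc] using h2
    · rw [sum_invPairs_promote, hcost]

/-- the minimum total swap cost over bribes in which exactly `k₁` voters
end up voting for `c₁` and exactly `k₂` voters end up voting for a party of `A₋₁`
equals the minimum of `Σ_i δ_i(α(i))` over class assignments `α` with exactly `k₁`
voters assigned to `{c₁}` and exactly `k₂` voters assigned to `A₋₁`. -/
theorem stmt_16 {C : Type*} [Fintype C] [DecidableEq C]
    (c1 : C) (A1 Abar : Finset C)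
    (hpart : ({c1} : Finset C) ∪ A1 ∪ Abar = Finset.univ)
    (hd1 : c1 ∉ A1) (hd2 : c1 ∉ Abar) (hd3 : Disjoint A1 Abar)
    (hA1 : A1.Nonempty) (hAbar : Abar.Nonempty)
    (n : ℕ) (O : Fin n → (C ≃ Fin (Fintype.card C)))
    (sw : Fin n → C → C → ℝ) (hsw : ∀ i x y, 0 ≤ sw i x y)
    (k1 k2 : ℕ) (hk : k1 + k2 ≤ n) :
    sInf { x : ℝ | ∃ Ob : Fin n → (C ≃ Fin (Fintype.card C)),
        (Finset.univ.filter fun i => ((Ob i) c1).val = 0).card = k1 ∧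
        (Finset.univ.filter fun i => ∃ c ∈ A1, ((Ob i) c).val = 0).card = k2 ∧
        x = ∑ i, ∑ q ∈ invPairs (O i) (Ob i), sw i q.1 q.2 } =
    sInf { x : ℝ | ∃ α : Fin n → Fin 3,
        (Finset.univ.filter fun i => α i = 0).card = k1 ∧
        (Finset.univ.filter fun i => α i = 1).card = k2 ∧
        x = ∑ i, delta c1 A1 Abar hA1 hAbar O sw i (α i) } :=
  stmt_16_general c1 A1 Abar hpart hd1 hd2 hd3 hA1 hAbar n O sw hsw k1 k2

end Stmt16
end
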